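/- arXiv:math-ph/0510060 — 4 statements merged into one kernel-verified Lean document; each statement's English description precedes it below -/
import Mathlib

section
/- Let d ≥ 1 and let ν be a stationary, ergodic probability measure on height configurations η : ℤ^d → {1,2,3,…} with expected height ∫ η(0) dν > 2d. Then ν-almost every configuration η is not stabilizable, i.e. ν(𝒮) = 0. -/
open MeasureTheory
open scoped ENNReal

/-- Nearest-neighbour adjacency on `ℤ^d`: `|x - y| = 1`. -/
def adj (d : ℕ) (x y : Fin d → ℤ) : Prop := (∑ i, (x i - y i).natAbs) = 1

instance (d : ℕ) (x y : Fin d → ℤ) : Decidable (adj d x y) := by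
  unfold adj; infer_instance

/-- The finite-volume toppling operator `(Δ_V m)(x)`, for `x ∈ V`. -/
def lapV (d : ℕ) (V : Finset (Fin d → ℤ)) (m : (Fin d → ℤ) → ℕ) (x : Fin d → ℤ) : ℤ :=
  2 * d * (m x : ℤ) - ∑ y ∈ V.filter (fun y => adj d x y), (m y : ℤ)

/-- `m` is a vector of toppling numbers making `η` stable in `V`:
`η(x) - (Δ_V m)(x) ≤ 2d` for all `x ∈ V`. -/
def Stabilizes (d : ℕ) (V : Finset (Fin d → ℤ)) (η m : (Fin d → ℤ) → ℕ) : Prop :=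
  ∀ x ∈ V, (η x : ℤ) - lapV d V m x ≤ 2 * d

/-- `m` is the pointwise least (on `V`) vector of toppling numbers stabilizing `η` in `V`,
i.e. `m = m_V^η` on `V`. -/
def IsMinStab (d : ℕ) (V : Finset (Fin d → ℤ)) (η m : (Fin d → ℤ) → ℕ) : Prop :=
  Stabilizes d V η m ∧ ∀ m', Stabilizes d V η m' → ∀ x ∈ V, m x ≤ m' x

/-- `η` is stabilizable: for every `x`, `sup_V m_V^η(x) < ∞`. -/
def Stabilizable (d : ℕ) (η : (Fin d → ℤ) → ℕ) : Prop :=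
  ∀ x : Fin d → ℤ, ∃ C : ℕ, ∀ (V : Finset (Fin d → ℤ)) (m : (Fin d → ℤ) → ℕ),
    IsMinStab d V η m → x ∈ V → m x ≤ C

/-- The set `𝒮` of stabilizable configurations. -/
def StabSet (d : ℕ) : Set ((Fin d → ℤ) → ℕ) := {η | Stabilizable d η}

/-- The set of height configurations (all heights at least `1`). -/
def Heights (d : ℕ) : Set ((Fin d → ℤ) → ℕ) := {η | ∀ x, 1 ≤ η x}

/-- The coordinate shift `τ_z η (x) = η (x + z)`. -/
def shiftC (d : ℕ) (z : Fin d → ℤ) (η : (Fin d → ℤ) → ℕ) : (Fin d → ℤ) → ℕ :=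
  fun x => η (x + z)

/-- `ν` is stationary (translation invariant). -/
def Stationary (d : ℕ) (ν : Measure ((Fin d → ℤ) → ℕ)) : Prop :=
  ∀ z : Fin d → ℤ, MeasurePreserving (shiftC d z) ν ν

/-- `ν` is ergodic under the shift action: shift-invariant Borel sets are trivial. -/
def ErgodicShift (d : ℕ) (ν : Measure ((Fin d → ℤ) → ℕ)) : Prop :=
  ∀ A : Set ((Fin d → ℤ) → ℕ), MeasurableSet A → (∀ z, shiftC d z ⁻¹' A = A) →
    ν A = 0 ∨ ν A = 1


-- neighbors
def phi (d : ℕ) (x : Fin d → ℤ) (p : Fin d × Bool) : Fin d → ℤ :=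
  Function.update x p.1 (x p.1 + if p.2 then 1 else -1)

def nbr (d : ℕ) (x : Fin d → ℤ) : Finset (Fin d → ℤ) :=
  Finset.univ.image (phi d x)

lemma phi_injective (d : ℕ) (x : Fin d → ℤ) : Function.Injective (phi d x) := by
  rintro ⟨i, b⟩ ⟨j, c⟩ h
  unfold phi at h
  by_cases hij : i = j
  · subst hij
    have := congrFun h i
    simp [Function.update_self] at this
    rcases b <;> rcases c <;> simp_all <;> omega
  · have := congrFun h i
    rw [Function.update_self, Function.update_of_ne (by exact hij)] at this
    rcases b <;> simp at this <;> omega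

lemma mem_nbr (d : ℕ) (x y : Fin d → ℤ) : y ∈ nbr d x ↔ adj d x y := by
  constructor
  · rintro hy
    rcases Finset.mem_image.mp hy with ⟨⟨i, b⟩, -, rfl⟩
    unfold adj phi
    have : ∀ j : Fin d, (x j - Function.update x i (x i + if b then 1 else -1) j).natAbs
        = if j = i then 1 else 0 := by
      intro j
      by_cases hj : j = i
      · subst hj; rw [Function.update_self]; rcases b <;> simp
      · rw [Function.update_of_ne hj]; simp [hj]
    rw [Finset.sum_congr rfl (fun j _ => this j)]
    simp
  · intro hy
    have h1 : ∃ i, (x i - y i).natAbs ≠ 0 := by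
      by_contra h
      push_neg at h
      have : (∑ i, (x i - y i).natAbs) = 0 := Finset.sum_eq_zero (fun i _ => h i)
      rw [adj] at hy; omega
    rcases h1 with ⟨i, hi⟩
    have hsum := hy
    rw [adj] at hsum
    have hmem : i ∈ (Finset.univ : Finset (Fin d)) := Finset.mem_univ i
    have hsplit : (x i - y i).natAbs + ∑ j ∈ Finset.univ.erase i, (x j - y j).natAbs
        = ∑ j, (x j - y j).natAbs := by
      simpa using Finset.add_sum_erase Finset.univ (fun j => (x j - y j).natAbs) hmem
    have hrest : ∑ j ∈ Finset.univ.erase i, (x j - y j).natAbs = 0 := by omega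
    have hone : (x i - y i).natAbs = 1 := by omega
    have hothers : ∀ j, j ≠ i → y j = x j := by
      intro j hj
      have := Finset.sum_eq_zero_iff.mp hrest j (Finset.mem_erase.mpr ⟨hj, Finset.mem_univ j⟩)
      omega
    have : y = phi d x (i, if x i - y i = -1 then true else false) := by
      funext j
      by_cases hj : j = i
      · subst hj
        unfold phi
        rw [Function.update_self]
        rcases Int.natAbs_eq_iff.mp hone with h | h <;> simp [h] <;> omega
      · unfold phi
        rw [Function.update_of_ne hj]
        exact hothers j hj
    rw [this]
    exact Finset.mem_image.mpr ⟨_, Finset.mem_univ _, rfl⟩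

lemma card_nbr (d : ℕ) (x : Fin d → ℤ) : (nbr d x).card = 2 * d := by
  rw [nbr, Finset.card_image_of_injective _ (phi_injective d x)]
  simp [Finset.card_univ, mul_comm]

lemma sq_update (d : ℕ) (x : Fin d → ℤ) (i : Fin d) (v : ℤ) :
    ∑ j, (Function.update x i v j)^2 = v^2 - (x i)^2 + ∑ j, (x j)^2 := by
  have h : ∀ j, (Function.update x i v j)^2 = Function.update (fun k => (x k)^2) i (v^2) j :=
    Function.apply_update (fun _ t => t^2) x i v
  rw [Finset.sum_congr rfl (fun j _ => h j)]
  rw [Finset.sum_update_of_mem (Finset.mem_univ i)]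
  have hx : ∑ j, (x j)^2 = (x i)^2 + ∑ j ∈ Finset.univ \ {i}, (x j)^2 :=
    (Finset.add_sum_erase Finset.univ (fun j => (x j)^2) (Finset.mem_univ i)).symm.trans
      (by rw [Finset.sdiff_singleton_eq_erase])
  omega

lemma sum_g_nbr (d : ℕ) (A : ℤ) (x : Fin d → ℤ) :
    ∑ y ∈ nbr d x, (A - ∑ i, (y i)^2) = 2 * d * (A - ∑ i, (x i)^2) - 2 * d := by
  rw [nbr, Finset.sum_image (fun p _ q _ h => phi_injective d x h)]
  rw [Fintype.sum_prod_type]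
  have hterm : ∀ i : Fin d, ∀ b : Bool,
      (A - ∑ j, (phi d x (i, b) j)^2)
        = (A - ∑ j, (x j)^2) - (if b then 2 * x i else -(2 * x i)) - 1 := by
    intro i b
    show (A - ∑ j, (Function.update x i (x i + if b then 1 else -1) j)^2) = _
    rw [sq_update]
    rcases b <;> simp <;> ring
  have hrow : ∀ i : Fin d, ∑ b : Bool, (A - ∑ j, (phi d x (i, b) j)^2)
      = 2 * (A - ∑ j, (x j)^2) - 2 := by
    intro i
    rw [Fintype.sum_bool, hterm i true, hterm i false]
    simp only [if_true, Bool.false_eq_true, if_false]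
    ring
  rw [Finset.sum_congr rfl (fun i _ => hrow i)]
  rw [Finset.sum_const, Finset.card_univ, Fintype.card_fin]
  push_cast
  ring

lemma lapV_congr (d : ℕ) (V : Finset (Fin d → ℤ)) (m m' : (Fin d → ℤ) → ℕ)
    (h : ∀ y ∈ V, m y = m' y) (x : Fin d → ℤ) (hx : x ∈ V) :
    lapV d V m x = lapV d V m' x := by
  unfold lapV
  rw [h x hx, Finset.sum_congr rfl (fun y hy => by rw [h y (Finset.mem_filter.mp hy).1])]

lemma stabilizes_congr_m (d : ℕ) (V : Finset (Fin d → ℤ)) (η m m' : (Fin d → ℤ) → ℕ)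
    (h : ∀ y ∈ V, m y = m' y) (hs : Stabilizes d V η m) : Stabilizes d V η m' := by
  intro x hx
  rw [← lapV_congr d V m m' h x hx]
  exact hs x hx

lemma stabilizes_congr_eta (d : ℕ) (V : Finset (Fin d → ℤ)) (η η' m : (Fin d → ℤ) → ℕ)
    (h : ∀ y ∈ V, η y = η' y) (hs : Stabilizes d V η m) : Stabilizes d V η' m := by
  intro x hx
  rw [← h x hx]
  exact hs x hx

lemma stabilizes_of_subset (d : ℕ) (V W : Finset (Fin d → ℤ)) (η m : (Fin d → ℤ) → ℕ)
    (hVW : V ⊆ W) (hs : Stabilizes d W η m) : Stabilizes d V η m := by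
  intro x hx
  have h1 := hs x (hVW hx)
  have hsum : ∑ y ∈ V.filter (fun y => adj d x y), (m y : ℤ)
      ≤ ∑ y ∈ W.filter (fun y => adj d x y), (m y : ℤ) := by
    apply Finset.sum_le_sum_of_subset_of_nonneg
    · exact Finset.filter_subset_filter _ hVW
    · intro y _ _; positivity
  unfold lapV at h1 ⊢
  omega

lemma stabilizes_min (d : ℕ) (V : Finset (Fin d → ℤ)) (η m m' : (Fin d → ℤ) → ℕ)
    (hs : Stabilizes d V η m) (hs' : Stabilizes d V η m') :
    Stabilizes d V η (fun y => min (m y) (m' y)) := by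
  intro x hx
  rcases le_total (m x) (m' x) with h | h
  · have h1 := hs x hx
    have hsum : ∑ y ∈ V.filter (fun y => adj d x y), ((min (m y) (m' y) : ℕ) : ℤ)
        ≤ ∑ y ∈ V.filter (fun y => adj d x y), (m y : ℤ) := by
      apply Finset.sum_le_sum; intro y _; exact_mod_cast min_le_left _ _
    unfold lapV at h1 ⊢
    have hmx : ((min (m x) (m' x) : ℕ) : ℤ) = (m x : ℤ) := by rw [min_eq_left h]
    simp only [hmx]
    omega
  · have h1 := hs' x hx
    have hsum : ∑ y ∈ V.filter (fun y => adj d x y), ((min (m y) (m' y) : ℕ) : ℤ)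
        ≤ ∑ y ∈ V.filter (fun y => adj d x y), (m' y : ℤ) := by
      apply Finset.sum_le_sum; intro y _; exact_mod_cast min_le_right _ _
    unfold lapV at h1 ⊢
    have hmx : ((min (m x) (m' x) : ℕ) : ℤ) = (m' x : ℤ) := by rw [min_eq_right h]
    simp only [hmx]
    omega

lemma exists_stabilizer (d : ℕ) (hd : 1 ≤ d) (V : Finset (Fin d → ℤ)) (η : (Fin d → ℤ) → ℕ) :
    ∃ m, Stabilizes d V η m := by
  classical
  obtain ⟨R, hRx⟩ : ∃ R : ℕ, ∀ x ∈ V, ∀ i, (x i).natAbs ≤ R := by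
    refine ⟨V.sup (fun x => Finset.univ.sup (fun i => (x i).natAbs)), ?_⟩
    intro x hx i
    calc (x i).natAbs ≤ Finset.univ.sup (fun i => (x i).natAbs) :=
          Finset.le_sup (f := fun i => (x i).natAbs) (Finset.mem_univ i)
      _ ≤ _ := Finset.le_sup (f := fun x => Finset.univ.sup (fun i => (x i).natAbs)) hx
  have hd' : (1:ℤ) ≤ (d:ℤ) := by exact_mod_cast hd
  obtain ⟨C, hC1, hCx⟩ : ∃ C : ℕ, 1 ≤ C ∧ ∀ x ∈ V, η x ≤ C :=
    ⟨max 1 (V.sup η), le_max_left _ _, fun x hx => le_trans (Finset.le_sup hx) (le_max_right _ _)⟩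
  set A : ℤ := (d:ℤ) * ((R:ℤ) + 2)^2 with hA
  have habs : ∀ (y : Fin d → ℤ) (B : ℕ), (∀ i, (y i).natAbs ≤ B) →
      ∑ i, (y i)^2 ≤ (d:ℤ) * (B:ℤ)^2 := by
    intro y B hy
    calc ∑ i, (y i)^2 ≤ ∑ _i : Fin d, (B:ℤ)^2 := by
          apply Finset.sum_le_sum
          intro i _
          have h1 : |y i| ≤ (B:ℤ) := by
            rw [Int.abs_eq_natAbs]
            exact_mod_cast hy i
          exact sq_le_sq' (neg_le_of_abs_le h1) (le_of_abs_le h1)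
      _ = (d : ℤ) * (B:ℤ)^2 := by
          rw [Finset.sum_const, Finset.card_univ, Fintype.card_fin]; push_cast; ring
  refine ⟨fun y => C * (A - ∑ i, (y i)^2).toNat, ?_⟩
  intro x hx
  have hgx : (d:ℤ) * (4*(R:ℤ) + 4) ≤ A - ∑ i, (x i)^2 := by
    have := habs x R (hRx x hx)
    nlinarith
  have hnbr_abs : ∀ y ∈ nbr d x, ∀ i, (y i).natAbs ≤ R + 1 := by
    intro y hy i
    have hadj := (mem_nbr d x y).mp hy
    rw [adj] at hadj
    have hterm : (x i - y i).natAbs ≤ 1 := by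
      calc (x i - y i).natAbs ≤ ∑ j, (x j - y j).natAbs :=
            Finset.single_le_sum (f := fun j => (x j - y j).natAbs)
              (fun j _ => Nat.zero_le _) (Finset.mem_univ i)
        _ = 1 := hadj
    have h3 := Int.natAbs_sub_le (x i) (x i - y i)
    have h4 : x i - (x i - y i) = y i := by ring
    rw [h4] at h3
    have := hRx x hx i
    omega
  have hgnbr : ∀ y ∈ nbr d x, 0 ≤ A - ∑ i, (y i)^2 := by
    intro y hy
    have := habs y (R+1) (hnbr_abs y hy)
    push_cast at this
    have h2 : (d:ℤ)*((R:ℤ)+1)^2 ≤ (d:ℤ)*((R:ℤ)+2)^2 := by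
      have hR0 : (0:ℤ) ≤ (R:ℤ) := Int.natCast_nonneg R
      nlinarith
    linarith
  have hsum : ∑ y ∈ V.filter (fun y => adj d x y), ((C * (A - ∑ i, (y i)^2).toNat : ℕ) : ℤ)
      ≤ (C:ℤ) * (2 * d * (A - ∑ i, (x i)^2) - 2 * d) := by
    calc ∑ y ∈ V.filter (fun y => adj d x y), ((C * (A - ∑ i, (y i)^2).toNat : ℕ) : ℤ)
        ≤ ∑ y ∈ nbr d x, ((C * (A - ∑ i, (y i)^2).toNat : ℕ) : ℤ) := by
          apply Finset.sum_le_sum_of_subset_of_nonneg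
          · intro y hy
            exact (mem_nbr d x y).mpr (Finset.mem_filter.mp hy).2
          · intro y _ _; positivity
      _ = ∑ y ∈ nbr d x, (C : ℤ) * (A - ∑ i, (y i)^2) := by
          apply Finset.sum_congr rfl
          intro y hy
          push_cast
          rw [Int.toNat_of_nonneg (hgnbr y hy)]
      _ = (C:ℤ) * ∑ y ∈ nbr d x, (A - ∑ i, (y i)^2) := by rw [Finset.mul_sum]
      _ = (C:ℤ) * (2 * d * (A - ∑ i, (x i)^2) - 2 * d) := by rw [sum_g_nbr]
  have hg0 : (0:ℤ) ≤ A - ∑ i, (x i)^2 := by nlinarith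
  have hmx : ((C * (A - ∑ i, (x i)^2).toNat : ℕ) : ℤ) = (C:ℤ) * (A - ∑ i, (x i)^2) := by
    push_cast
    rw [Int.toNat_of_nonneg hg0]
  have hηx : (η x : ℤ) ≤ (C:ℤ) := by exact_mod_cast hCx x hx
  have hC1' : (1:ℤ) ≤ (C:ℤ) := by exact_mod_cast hC1
  unfold lapV
  rw [hmx]
  have h2d : (0:ℤ) ≤ 2*(d:ℤ) := by positivity
  nlinarith [hsum, hgx]

noncomputable def mu (d : ℕ) (V : Finset (Fin d → ℤ)) (η : (Fin d → ℤ) → ℕ) (x : Fin d → ℤ) : ℕ :=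
  sInf {n | ∃ m, Stabilizes d V η m ∧ m x = n}

lemma mu_set_nonempty (d : ℕ) (hd : 1 ≤ d) (V : Finset (Fin d → ℤ)) (η : (Fin d → ℤ) → ℕ)
    (x : Fin d → ℤ) : {n | ∃ m, Stabilizes d V η m ∧ m x = n}.Nonempty := by
  obtain ⟨m, hm⟩ := exists_stabilizer d hd V η
  exact ⟨m x, m, hm, rfl⟩

lemma mu_le (d : ℕ) (V : Finset (Fin d → ℤ)) (η m : (Fin d → ℤ) → ℕ)
    (hm : Stabilizes d V η m) (x : Fin d → ℤ) : mu d V η x ≤ m x :=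
  Nat.sInf_le ⟨m, hm, rfl⟩

lemma exists_stab_le_mu (d : ℕ) (hd : 1 ≤ d) (V : Finset (Fin d → ℤ)) (η : (Fin d → ℤ) → ℕ)
    (S : Finset (Fin d → ℤ)) : ∃ m, Stabilizes d V η m ∧ ∀ x ∈ S, m x ≤ mu d V η x := by
  classical
  induction S using Finset.induction with
  | empty =>
      obtain ⟨m, hm⟩ := exists_stabilizer d hd V η
      exact ⟨m, hm, by simp⟩
  | @insert a S ha ih =>
      obtain ⟨m, hm, hS⟩ := ih
      have hmem := Nat.sInf_mem (mu_set_nonempty d hd V η a)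
      obtain ⟨ma, hma, hmaa⟩ := hmem
      refine ⟨fun y => min (m y) (ma y), stabilizes_min d V η m ma hm hma, ?_⟩
      intro x hx
      rcases Finset.mem_insert.mp hx with rfl | hx
      · calc min (m x) (ma x) ≤ ma x := min_le_right _ _
          _ = mu d V η x := hmaa
      · exact le_trans (min_le_left _ _) (hS x hx)

lemma mu_of_not_mem (d : ℕ) (hd : 1 ≤ d) (V : Finset (Fin d → ℤ)) (η : (Fin d → ℤ) → ℕ)
    (x : Fin d → ℤ) (hx : x ∉ V) : mu d V η x = 0 := by
  classical
  obtain ⟨m, hm⟩ := exists_stabilizer d hd V η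
  have hm' : Stabilizes d V η (Function.update m x 0) := by
    apply stabilizes_congr_m d V η m _ _ hm
    intro y hy
    rw [Function.update_of_ne (by intro h; subst h; exact hx hy)]
  have := mu_le d V η _ hm' x
  simpa using this

lemma stabilizes_mu (d : ℕ) (hd : 1 ≤ d) (V : Finset (Fin d → ℤ)) (η : (Fin d → ℤ) → ℕ) :
    Stabilizes d V η (fun x => mu d V η x) := by
  classical
  obtain ⟨m, hm, hS⟩ := exists_stab_le_mu d hd V η V
  apply stabilizes_congr_m d V η m _ _ hm
  intro y hy
  exact le_antisymm (hS y hy) (mu_le d V η m hm y)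

lemma isMinStab_mu (d : ℕ) (hd : 1 ≤ d) (V : Finset (Fin d → ℤ)) (η : (Fin d → ℤ) → ℕ) :
    IsMinStab d V η (fun x => mu d V η x) :=
  ⟨stabilizes_mu d hd V η, fun m' hm' x _ => mu_le d V η m' hm' x⟩

lemma isMinStab_eq_mu (d : ℕ) (hd : 1 ≤ d) (V : Finset (Fin d → ℤ)) (η m : (Fin d → ℤ) → ℕ)
    (hm : IsMinStab d V η m) (x : Fin d → ℤ) (hx : x ∈ V) : m x = mu d V η x :=
  le_antisymm (hm.2 _ (stabilizes_mu d hd V η) x hx) (mu_le d V η m hm.1 x)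

lemma mu_mono (d : ℕ) (hd : 1 ≤ d) (V W : Finset (Fin d → ℤ)) (η : (Fin d → ℤ) → ℕ)
    (hVW : V ⊆ W) (x : Fin d → ℤ) : mu d V η x ≤ mu d W η x := by
  by_cases hx : x ∈ V
  · exact mu_le d V η _ (stabilizes_of_subset d V W η _ hVW (stabilizes_mu d hd W η)) x
  · rw [mu_of_not_mem d hd V η x hx]; exact Nat.zero_le _

-- shift lemmas
lemma adj_shift (d : ℕ) (x y z : Fin d → ℤ) : adj d (x + z) (y + z) ↔ adj d x y := by
  unfold adj
  constructor <;> intro h <;> rw [← h] <;> apply Finset.sum_congr rfl <;>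
    intro i _ <;> simp [Pi.add_apply] <;> ring_nf

lemma stabilizes_shift (d : ℕ) (V : Finset (Fin d → ℤ)) (η m : (Fin d → ℤ) → ℕ) (z : Fin d → ℤ) :
    Stabilizes d V (shiftC d z η) m ↔
      Stabilizes d (V.image (· + z)) η (fun w => m (w - z)) := by
  classical
  have key : ∀ x ∈ V, lapV d (V.image (· + z)) (fun w => m (w - z)) (x + z) = lapV d V m x := by
    intro x hx
    unfold lapV
    have himg : (V.image (· + z)).filter (fun y => adj d (x + z) y)
        = (V.filter (fun y => adj d x y)).image (· + z) := by
      ext y'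
      simp only [Finset.mem_filter, Finset.mem_image]
      constructor
      · rintro ⟨⟨y, hy, rfl⟩, hadj⟩
        exact ⟨y, ⟨hy, (adj_shift d x y z).mp hadj⟩, rfl⟩
      · rintro ⟨y, ⟨hy, hadj⟩, rfl⟩
        exact ⟨⟨y, hy, rfl⟩, (adj_shift d x y z).mpr hadj⟩
    rw [himg, Finset.sum_image (fun a _ b _ h => by simpa using h)]
    simp
  constructor
  · intro hs x' hx'
    rcases Finset.mem_image.mp hx' with ⟨x, hx, rfl⟩
    rw [key x hx]
    have := hs x hx
    simpa [shiftC] using this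
  · intro hs x hx
    have := hs (x + z) (Finset.mem_image_of_mem _ hx)
    rw [key x hx] at this
    simpa [shiftC] using this

lemma mu_shift (d : ℕ) (V : Finset (Fin d → ℤ)) (η : (Fin d → ℤ) → ℕ) (z x : Fin d → ℤ) :
    mu d V (shiftC d z η) x = mu d (V.image (· + z)) η (x + z) := by
  unfold mu
  congr 1
  ext n
  constructor
  · rintro ⟨m, hm, rfl⟩
    refine ⟨fun w => m (w - z), (stabilizes_shift d V η m z).mp hm, by simp⟩
  · rintro ⟨m, hm, rfl⟩
    refine ⟨fun w => m (w + z), ?_, by simp⟩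
    rw [stabilizes_shift d V η _ z]
    have : (fun w => m (w - z + z)) = m := by funext w; simp
    rw [this]
    exact hm

noncomputable def MM (d : ℕ) (η : (Fin d → ℤ) → ℕ) (x : Fin d → ℤ) : ℝ≥0∞ :=
  ⨆ V : Finset (Fin d → ℤ), (mu d V η x : ℝ≥0∞)

lemma measurable_mu (d : ℕ) (V : Finset (Fin d → ℤ)) (x : Fin d → ℤ) :
    Measurable (fun η => mu d V η x) := by
  classical
  have hres : Measurable (fun (η : (Fin d → ℤ) → ℕ) => (fun v : {y // y ∈ V} => η v.1)) :=
    measurable_pi_lambda _ (fun v => measurable_pi_apply v.1)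
  have hg : Measurable (fun f : {y // y ∈ V} → ℕ =>
      mu d V (fun y => if h : y ∈ V then f ⟨y, h⟩ else 0) x) := Measurable.of_discrete
  have heq : (fun η => mu d V η x) = (fun f : {y // y ∈ V} → ℕ =>
      mu d V (fun y => if h : y ∈ V then f ⟨y, h⟩ else 0) x) ∘
      (fun (η : (Fin d → ℤ) → ℕ) => (fun v : {y // y ∈ V} => η v.1)) := by
    funext η
    show mu d V η x = mu d V (fun y => if h : y ∈ V then η y else 0) x
    unfold mu
    congr 1
    ext n
    constructor <;> rintro ⟨m, hm, rfl⟩ <;> refine ⟨m, ?_, rfl⟩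
    · exact stabilizes_congr_eta d V _ _ m (fun y hy => by simp [hy]) hm
    · exact stabilizes_congr_eta d V _ _ m (fun y hy => by simp [hy]) hm
  rw [heq]
  exact hg.comp hres

lemma measurable_MM (d : ℕ) (x : Fin d → ℤ) : Measurable (fun η => MM d η x) :=
  Measurable.iSup (fun V =>
    (Measurable.of_discrete (f := (Nat.cast : ℕ → ℝ≥0∞))).comp (measurable_mu d V x))

lemma mu_le_MM (d : ℕ) (V : Finset (Fin d → ℤ)) (η : (Fin d → ℤ) → ℕ) (x : Fin d → ℤ) :
    (mu d V η x : ℝ≥0∞) ≤ MM d η x := le_iSup (fun V => ((mu d V η x : ℕ) : ℝ≥0∞)) V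

lemma MM_shift (d : ℕ) (η : (Fin d → ℤ) → ℕ) (z x : Fin d → ℤ) :
    MM d (shiftC d z η) x = MM d η (x + z) := by
  apply le_antisymm
  · apply iSup_le
    intro V
    rw [mu_shift]
    exact mu_le_MM d _ η (x + z)
  · apply iSup_le
    intro W
    have : W = (W.image (· + (-z))).image (· + z) := by
      ext w
      simp only [Finset.mem_image]
      constructor
      · intro hw; exact ⟨w + (-z), ⟨w, hw, rfl⟩, by abel⟩
      · rintro ⟨u, ⟨v, hv, rfl⟩, rfl⟩; simpa using hv
    calc ((mu d W η (x + z) : ℕ) : ℝ≥0∞)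
        = mu d (W.image (· + (-z))) (shiftC d z η) x := by rw [mu_shift, ← this]
      _ ≤ MM d (shiftC d z η) x := mu_le_MM d _ _ x

noncomputable def mfin (d : ℕ) (η : (Fin d → ℤ) → ℕ) (x : Fin d → ℤ) : ℕ :=
  sInf {C : ℕ | ∀ V, mu d V η x ≤ C}

lemma mfin_spec (d : ℕ) (hd : 1 ≤ d) (η : (Fin d → ℤ) → ℕ) (hη : Stabilizable d η)
    (x : Fin d → ℤ) : ∀ V, mu d V η x ≤ mfin d η x := by
  obtain ⟨C, hC⟩ := hη x
  have hne : {C : ℕ | ∀ V, mu d V η x ≤ C}.Nonempty := by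
    refine ⟨C, fun V => ?_⟩
    by_cases hx : x ∈ V
    · rw [← isMinStab_eq_mu d hd V η _ (isMinStab_mu d hd V η) x hx]
      exact hC V _ (isMinStab_mu d hd V η) hx
    · rw [mu_of_not_mem d hd V η x hx]; exact Nat.zero_le _
  exact Nat.sInf_mem hne

lemma mfin_attained (d : ℕ) (hd : 1 ≤ d) (η : (Fin d → ℤ) → ℕ) (hη : Stabilizable d η)
    (x : Fin d → ℤ) : ∃ V, mu d V η x = mfin d η x := by
  rcases Nat.eq_zero_or_pos (mfin d η x) with h0 | hpos
  · refine ⟨∅, ?_⟩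
    rw [mu_of_not_mem d hd ∅ η x (Finset.notMem_empty x), h0]
  · by_contra hc
    push_neg at hc
    have hall : ∀ V, mu d V η x ≤ mfin d η x - 1 := by
      intro V
      have h1 := mfin_spec d hd η hη x V
      have h2 := hc V
      omega
    have : mfin d η x - 1 ∈ {C : ℕ | ∀ V, mu d V η x ≤ C} := hall
    have h3 : mfin d η x ≤ mfin d η x - 1 := Nat.sInf_le this
    omega

lemma MM_eq_mfin (d : ℕ) (hd : 1 ≤ d) (η : (Fin d → ℤ) → ℕ) (hη : Stabilizable d η)
    (x : Fin d → ℤ) : MM d η x = (mfin d η x : ℝ≥0∞) := by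
  apply le_antisymm
  · apply iSup_le
    intro V
    exact_mod_cast mfin_spec d hd η hη x V
  · obtain ⟨V, hV⟩ := mfin_attained d hd η hη x
    rw [← hV]
    exact mu_le_MM d V η x

lemma stabSet_eq (d : ℕ) (hd : 1 ≤ d) :
    StabSet d = {η | ∀ x, MM d η x ≠ ⊤} := by
  ext η
  constructor
  · intro hη x
    rw [MM_eq_mfin d hd η hη x]
    exact ENNReal.natCast_ne_top _
  · intro hη x
    obtain ⟨C, hC⟩ := ENNReal.exists_nat_gt (hη x)
    refine ⟨C, fun V m hm hx => ?_⟩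
    rw [isMinStab_eq_mu d hd V η m hm x hx]
    have h1 : ((mu d V η x : ℕ) : ℝ≥0∞) ≤ MM d η x := mu_le_MM d V η x
    have h2 : ((mu d V η x : ℕ) : ℝ≥0∞) < (C : ℝ≥0∞) := lt_of_le_of_lt h1 hC
    exact_mod_cast h2.le

lemma measurableSet_stabSet (d : ℕ) (hd : 1 ≤ d) : MeasurableSet (StabSet d) := by
  rw [stabSet_eq d hd]
  have : {η : (Fin d → ℤ) → ℕ | ∀ x, MM d η x ≠ ⊤}
      = ⋂ x, {η | MM d η x ≠ ⊤} := by ext η; simp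
  rw [this]
  exact MeasurableSet.iInter (fun x =>
    ((measurable_MM d x) (measurableSet_singleton ⊤)).compl)

lemma stabSet_shift_inv (d : ℕ) (hd : 1 ≤ d) (z : Fin d → ℤ) :
    shiftC d z ⁻¹' StabSet d = StabSet d := by
  rw [stabSet_eq d hd]
  ext η
  simp only [Set.mem_preimage, Set.mem_setOf_eq]
  constructor
  · intro h x
    have := h (x - z)
    rwa [MM_shift, sub_add_cancel] at this
  · intro h x
    rw [MM_shift]
    exact h (x + z)

lemma key_ineq (d : ℕ) (hd : 1 ≤ d) (η : (Fin d → ℤ) → ℕ) (hη : Stabilizable d η)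
    (x : Fin d → ℤ) :
    η x + ∑ y ∈ nbr d x, mfin d η y ≤ 2 * d * mfin d η x + 2 * d := by
  classical
  set Vy : (Fin d → ℤ) → Finset (Fin d → ℤ) :=
    fun y => Classical.choose (mfin_attained d hd η hη y) with hVy
  have hVy_spec : ∀ y, mu d (Vy y) η y = mfin d η y :=
    fun y => Classical.choose_spec (mfin_attained d hd η hη y)
  set W : Finset (Fin d → ℤ) := insert x ((nbr d x) ∪ (nbr d x).biUnion Vy) with hW
  have hxW : x ∈ W := Finset.mem_insert_self _ _
  have hnbrW : nbr d x ⊆ W := fun y hy =>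
    Finset.mem_insert_of_mem (Finset.mem_union_left _ hy)
  have hVyW : ∀ y ∈ nbr d x, Vy y ⊆ W := fun y hy v hv =>
    Finset.mem_insert_of_mem (Finset.mem_union_right _ (Finset.mem_biUnion.mpr ⟨y, hy, hv⟩))
  have hfil : W.filter (fun y => adj d x y) = nbr d x := by
    ext y
    simp only [Finset.mem_filter]
    constructor
    · rintro ⟨-, hadj⟩
      exact (mem_nbr d x y).mpr hadj
    · intro hy
      exact ⟨hnbrW hy, (mem_nbr d x y).mp hy⟩
  have hstab := stabilizes_mu d hd W η x hxW
  unfold lapV at hstab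
  rw [hfil] at hstab
  -- hstab : (η x:ℤ) - (2d * mu W x - ∑_{y∈nbr} mu W y) ≤ 2d
  have hx_le : mu d W η x ≤ mfin d η x := mfin_spec d hd η hη x W
  have hy_ge : ∀ y ∈ nbr d x, mfin d η y ≤ mu d W η y := by
    intro y hy
    rw [← hVy_spec y]
    exact mu_mono d hd (Vy y) W η (hVyW y hy) y
  have hsum : (∑ y ∈ nbr d x, (mfin d η y : ℤ)) ≤ ∑ y ∈ nbr d x, ((mu d W η y : ℕ) : ℤ) := by
    apply Finset.sum_le_sum
    intro y hy
    exact_mod_cast hy_ge y hy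
  have hgoal : (η x : ℤ) + ∑ y ∈ nbr d x, (mfin d η y : ℤ)
      ≤ 2 * d * (mfin d η x : ℤ) + 2 * d := by
    have hx_le' : ((mu d W η x : ℕ) : ℤ) ≤ (mfin d η x : ℤ) := by exact_mod_cast hx_le
    have h2d : (0:ℤ) ≤ 2 * (d:ℤ) := by positivity
    nlinarith [hstab, hsum, hx_le']
  have hcast : ((∑ y ∈ nbr d x, mfin d η y : ℕ) : ℤ) = ∑ y ∈ nbr d x, (mfin d η y : ℤ) := by
    push_cast; rfl
  exact_mod_cast hgoal

lemma key_ineq_trunc (d : ℕ) (hd : 1 ≤ d) (η : (Fin d → ℤ) → ℕ) (hη : Stabilizable d η)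
    (K : ℕ) :
    (∑ y ∈ nbr d 0, min (mfin d η y) K) + η 0 * (if mfin d η 0 < K then 1 else 0)
      ≤ 2 * d * min (mfin d η 0) K + 2 * d * (if mfin d η 0 < K then 1 else 0) := by
  by_cases hK : mfin d η 0 < K
  · rw [if_pos hK, min_eq_left hK.le]
    have h1 := key_ineq d hd η hη 0
    have h2 : ∑ y ∈ nbr d 0, min (mfin d η y) K ≤ ∑ y ∈ nbr d 0, mfin d η y :=
      Finset.sum_le_sum (fun y _ => min_le_left _ _)
    omega
  · rw [if_neg hK]
    push_neg at hK
    rw [min_eq_right hK]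
    have h2 : ∑ y ∈ nbr d 0, min (mfin d η y) K ≤ ∑ _y ∈ nbr d 0, K :=
      Finset.sum_le_sum (fun y _ => min_le_right _ _)
    rw [Finset.sum_const, card_nbr, smul_eq_mul] at h2
    omega

lemma cast_min_ennreal (a b : ℕ) : ((min a b : ℕ) : ℝ≥0∞) = min (a : ℝ≥0∞) (b : ℝ≥0∞) := by
  rcases le_total a b with h | h
  · rw [min_eq_left h, min_eq_left (by exact_mod_cast h : (a:ℝ≥0∞) ≤ b)]
  · rw [min_eq_right h, min_eq_right (by exact_mod_cast h : (b:ℝ≥0∞) ≤ a)]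

/-- if `ν` is a stationary ergodic probability measure on height configurations
with expected height `> 2d`, then `ν`-a.e. configuration is not stabilizable, i.e. `ν(𝒮) = 0`. -/
theorem not_stabilizable_of_density_gt_two_d (d : ℕ) (hd : 1 ≤ d)
    (ν : Measure ((Fin d → ℤ) → ℕ)) [IsProbabilityMeasure ν]
    (hH : ν (Heights d) = 1) (hstat : Stationary d ν) (herg : ErgodicShift d ν)
    (hdens : (2 * d : ℝ≥0∞) < ∫⁻ η, (η 0 : ℝ≥0∞) ∂ν) :
    ν (StabSet d) = 0 := by
  classical
  rcases herg (StabSet d) (measurableSet_stabSet d hd)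
    (fun z => stabSet_shift_inv d hd z) with h0 | h1
  · exact h0
  exfalso
  have hae : ∀ᵐ η ∂ν, Stabilizable d η := by
    rw [ae_iff]
    have : {η | ¬ Stabilizable d η} = (StabSet d)ᶜ := rfl
    rw [this]
    rw [measure_compl (measurableSet_stabSet d hd) (measure_ne_top ν _), h1]
    simp
  -- the truncated toppling field
  set FM : ℕ → (Fin d → ℤ) → ((Fin d → ℤ) → ℕ) → ℝ≥0∞ :=
    fun K y η => min (MM d η y) K with hFM
  have measFM : ∀ K y, Measurable (FM K y) :=
    fun K y => (measurable_MM d y).min measurable_const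
  set AK : ℕ → Set ((Fin d → ℤ) → ℕ) := fun K => {η | MM d η 0 < (K:ℝ≥0∞)} with hAK
  have measAK : ∀ K, MeasurableSet (AK K) :=
    fun K => measurableSet_lt (measurable_MM d 0) measurable_const
  set I : ℕ → ℝ≥0∞ := fun K => ∫⁻ η, FM K 0 η ∂ν with hI
  have hIle : ∀ K, I K ≤ (K : ℝ≥0∞) := by
    intro K
    calc I K ≤ ∫⁻ _, (K:ℝ≥0∞) ∂ν := lintegral_mono (fun η => min_le_right _ _)
      _ = (K:ℝ≥0∞) := by rw [lintegral_const, measure_univ, mul_one]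
  have hIshift : ∀ K (y : Fin d → ℤ), ∫⁻ η, FM K y η ∂ν = I K := by
    intro K y
    have heq : ∀ η, FM K y η = FM K 0 (shiftC d y η) := by
      intro η
      rw [hFM]
      simp only
      rw [MM_shift, zero_add]
    calc ∫⁻ η, FM K y η ∂ν = ∫⁻ η, FM K 0 (shiftC d y η) ∂ν := by
          exact lintegral_congr heq
      _ = ∫⁻ η, FM K 0 η ∂ν := (hstat y).lintegral_comp (measFM K 0)
  set J : ℕ → ℝ≥0∞ := fun K => ∫⁻ η, (η 0 : ℝ≥0∞) * (AK K).indicator 1 η ∂ν with hJ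
  have meas_eta0 : Measurable (fun η : (Fin d → ℤ) → ℕ => (η 0 : ℝ≥0∞)) :=
    (Measurable.of_discrete (f := (Nat.cast : ℕ → ℝ≥0∞))).comp (measurable_pi_apply 0)
  have measInd : ∀ K, Measurable ((AK K).indicator (1 : ((Fin d → ℤ) → ℕ) → ℝ≥0∞)) :=
    fun K => measurable_const.indicator (measAK K)
  -- pointwise inequality, a.e.
  have hpt : ∀ K, ∀ᵐ η ∂ν,
      (∑ y ∈ nbr d 0, FM K y η) + (η 0 : ℝ≥0∞) * (AK K).indicator 1 η
        ≤ ((2*d : ℕ) : ℝ≥0∞) * FM K 0 η + ((2*d : ℕ) : ℝ≥0∞) * (AK K).indicator 1 η := by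
    intro K
    filter_upwards [hae] with η hη
    have hcast : ∀ y, FM K y η = ((min (mfin d η y) K : ℕ) : ℝ≥0∞) := by
      intro y
      rw [hFM]; simp only
      rw [MM_eq_mfin d hd η hη y, cast_min_ennreal]
    have hmemiff : (η ∈ AK K) ↔ mfin d η 0 < K := by
      have : η ∈ AK K ↔ MM d η 0 < (K:ℝ≥0∞) := Iff.rfl
      rw [this, MM_eq_mfin d hd η hη 0]
      exact_mod_cast Iff.rfl
    have hind : (AK K).indicator (1 : ((Fin d → ℤ) → ℕ) → ℝ≥0∞) η
        = ((if mfin d η 0 < K then 1 else 0 : ℕ) : ℝ≥0∞) := by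
      by_cases h : mfin d η 0 < K
      · rw [Set.indicator_of_mem (hmemiff.mpr h), if_pos h]; simp
      · rw [Set.indicator_of_notMem (fun hh => h (hmemiff.mp hh)), if_neg h]; simp
    have hkey := key_ineq_trunc d hd η hη K
    calc (∑ y ∈ nbr d 0, FM K y η) + (η 0 : ℝ≥0∞) * (AK K).indicator 1 η
        = (((∑ y ∈ nbr d 0, min (mfin d η y) K) + η 0 * (if mfin d η 0 < K then 1 else 0) : ℕ) : ℝ≥0∞) := by
          rw [hind, Finset.sum_congr rfl (fun y _ => hcast y)]
          push_cast
          ring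
      _ ≤ (((2 * d * min (mfin d η 0) K + 2 * d * (if mfin d η 0 < K then 1 else 0)) : ℕ) : ℝ≥0∞) := by
          exact_mod_cast hkey
      _ = ((2*d : ℕ) : ℝ≥0∞) * FM K 0 η + ((2*d : ℕ) : ℝ≥0∞) * (AK K).indicator 1 η := by
          rw [hind, hcast 0]
          push_cast
          ring
  -- integrate
  have hint : ∀ K, ((2*d : ℕ) : ℝ≥0∞) * I K + J K
      ≤ ((2*d : ℕ) : ℝ≥0∞) * I K + ((2*d : ℕ) : ℝ≥0∞) * ν (AK K) := by
    intro K
    have hL : ∫⁻ η, ((∑ y ∈ nbr d 0, FM K y η) + (η 0 : ℝ≥0∞) * (AK K).indicator 1 η) ∂ν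
        = ((2*d : ℕ) : ℝ≥0∞) * I K + J K := by
      rw [lintegral_add_left (Finset.measurable_sum _ (fun y _ => measFM K y))]
      congr 1
      rw [lintegral_finset_sum _ (fun y _ => measFM K y)]
      rw [Finset.sum_congr rfl (fun y _ => hIshift K y), Finset.sum_const, card_nbr]
      simp [nsmul_eq_mul]
    have hR : ∫⁻ η, (((2*d : ℕ) : ℝ≥0∞) * FM K 0 η + ((2*d : ℕ) : ℝ≥0∞) * (AK K).indicator 1 η) ∂ν
        = ((2*d : ℕ) : ℝ≥0∞) * I K + ((2*d : ℕ) : ℝ≥0∞) * ν (AK K) := by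
      rw [lintegral_add_left ((measFM K 0).const_mul _)]
      rw [lintegral_const_mul _ (measFM K 0), lintegral_const_mul _ (measInd K)]
      rw [lintegral_indicator_one (measAK K)]
    rw [← hL, ← hR]
    exact lintegral_mono_ae (hpt K)
  have hJle : ∀ K, J K ≤ ((2*d : ℕ) : ℝ≥0∞) := by
    intro K
    have hne : ((2*d : ℕ) : ℝ≥0∞) * I K ≠ ⊤ :=
      ENNReal.mul_ne_top (ENNReal.natCast_ne_top _)
        ((hIle K).trans_lt (ENNReal.natCast_lt_top K)).ne
    have h2 := (ENNReal.add_le_add_iff_left hne).mp (hint K)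
    calc J K ≤ ((2*d : ℕ) : ℝ≥0∞) * ν (AK K) := h2
      _ ≤ ((2*d : ℕ) : ℝ≥0∞) * 1 := by
          exact mul_le_mul_right prob_le_one _
      _ = ((2*d : ℕ) : ℝ≥0∞) := mul_one _
  -- monotone limit
  have hmono : Monotone (fun K => fun η => (η 0 : ℝ≥0∞) * (AK K).indicator 1 η) := by
    intro K K' hKK'
    intro η
    apply mul_le_mul_right
    have hsub : AK K ⊆ AK K' := by
      intro η' hη'
      have h1 : MM d η' 0 < (K : ℝ≥0∞) := hη'
      exact lt_of_lt_of_le h1 (by exact_mod_cast Nat.cast_le.mpr hKK')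
    exact Set.indicator_le_indicator_of_subset hsub (fun _ => zero_le) η
  have hsup : ∀ᵐ η ∂ν, (⨆ K, (η 0 : ℝ≥0∞) * (AK K).indicator 1 η) = (η 0 : ℝ≥0∞) := by
    filter_upwards [hae] with η hη
    apply le_antisymm
    · apply iSup_le
      intro K
      calc (η 0 : ℝ≥0∞) * (AK K).indicator 1 η ≤ (η 0 : ℝ≥0∞) * 1 := by
            apply mul_le_mul_right
            exact Set.indicator_le_self' (fun _ _ => zero_le) η
        _ = (η 0 : ℝ≥0∞) := mul_one _
    · have hfin : MM d η 0 ≠ ⊤ := by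
        rw [MM_eq_mfin d hd η hη 0]; exact ENNReal.natCast_ne_top _
      obtain ⟨K, hK⟩ := ENNReal.exists_nat_gt hfin
      have hmem : η ∈ AK K := hK
      calc (η 0 : ℝ≥0∞) = (η 0 : ℝ≥0∞) * (AK K).indicator 1 η := by
            rw [Set.indicator_of_mem hmem]; simp
        _ ≤ ⨆ K, (η 0 : ℝ≥0∞) * (AK K).indicator 1 η :=
            le_iSup (fun K => (η 0 : ℝ≥0∞) * (AK K).indicator 1 η) K
  have hlim : ∫⁻ η, (η 0 : ℝ≥0∞) ∂ν = ⨆ K, J K := by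
    calc ∫⁻ η, (η 0 : ℝ≥0∞) ∂ν
        = ∫⁻ η, (⨆ K, (η 0 : ℝ≥0∞) * (AK K).indicator 1 η) ∂ν := by
          apply lintegral_congr_ae
          filter_upwards [hsup] with η h
          exact h.symm
      _ = ⨆ K, J K := by
          rw [lintegral_iSup (f := fun K η => (η 0 : ℝ≥0∞) * (AK K).indicator 1 η) (fun K => meas_eta0.mul (measInd K)) hmono]
  have hfinal : ∫⁻ η, (η 0 : ℝ≥0∞) ∂ν ≤ ((2*d : ℕ) : ℝ≥0∞) := by
    rw [hlim]
    exact iSup_le hJle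
  have : ((2*d : ℕ) : ℝ≥0∞) = (2 * d : ℝ≥0∞) := by push_cast; ring
  rw [this] at hfinal
  exact absurd hfinal (not_le.mpr hdens)
end

section
/- Let d ≥ 1 and let μ, ν be probability measures on height configurations on ℤ^d such that there exists a coupling P of ν and μ (a probability measure on pairs of configurations with first marginal ν and second marginal μ) with P({(ξ,η) : ξ(x) ≤ η(x) for all x ∈ ℤ^d}) = 1. If μ is stabilizable, then ν is stabilizable. -/
open MeasureTheory
open scoped ENNReal

namespace SandpileAux
variable {d : ℕ}

lemma adj_comm (x y : Fin d → ℤ) : adj d x y ↔ adj d y x := by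
  unfold adj
  have key : (∑ i, (x i - y i).natAbs) = ∑ i, (y i - x i).natAbs :=
    Finset.sum_congr rfl fun i _ => by omega
  constructor <;> intro h
  · show (∑ i, (y i - x i).natAbs) = 1
    rw [← key]; exact h
  · show (∑ i, (x i - y i).natAbs) = 1
    rw [key]; exact h

lemma adj_irrefl (x : Fin d → ℤ) : ¬ adj d x x := by
  simp [adj]

def sq (x : Fin d → ℤ) : ℤ := ∑ i, (x i)^2

lemma sq_nonneg' (x : Fin d → ℤ) : 0 ≤ sq x :=
  Finset.sum_nonneg fun i _ => sq_nonneg _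

lemma sq_update (x : Fin d → ℤ) (j : Fin d) (v : ℤ) :
    sq (Function.update x j v) = sq x - x j ^ 2 + v ^ 2 := by
  unfold sq
  have h : (fun i => (Function.update x j v i)^2) = Function.update (fun i => (x i)^2) j (v^2) :=
    funext fun i => (Function.apply_update (fun _ t => t^2) x j v i)
  rw [h, Finset.sum_update_of_mem (Finset.mem_univ j), Finset.sum_sdiff_eq_sub (Finset.subset_univ _)]
  simp; ring

def nbr (x : Fin d → ℤ) : Finset (Fin d → ℤ) :=
  Finset.image (fun p : Fin d × Bool => Function.update x p.1 (x p.1 + if p.2 then 1 else -1))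
    Finset.univ

lemma mem_nbr_of_adj {x y : Fin d → ℤ} (h : adj d x y) : y ∈ nbr x := by
  have hne : (∑ i, (x i - y i).natAbs) ≠ 0 := by rw [h]; omega
  obtain ⟨j, -, hj⟩ := Finset.exists_ne_zero_of_sum_ne_zero hne
  have hrest : ∀ i, i ≠ j → (x i - y i).natAbs = 0 := by
    intro i hi
    by_contra hne2
    have h1 : (x j - y j).natAbs + (x i - y i).natAbs ≤ ∑ k, (x k - y k).natAbs := by
      have he : (x j - y j).natAbs + ∑ k ∈ Finset.univ.erase j, (x k - y k).natAbs
          = ∑ k, (x k - y k).natAbs := Finset.add_sum_erase _ (fun k => (x k - y k).natAbs) (Finset.mem_univ j)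
      have h2 : (x i - y i).natAbs ≤ ∑ k ∈ Finset.univ.erase j, (x k - y k).natAbs :=
        Finset.single_le_sum (f := fun k => (x k - y k).natAbs) (fun k _ => Nat.zero_le _)
          (Finset.mem_erase.2 ⟨hi, Finset.mem_univ i⟩)
      omega
    have hsum : (∑ i, (x i - y i).natAbs) = 1 := h
    omega
  have hyeq : y = Function.update x j (y j) := by
    funext i
    by_cases hi : i = j
    · subst hi; simp
    · have := hrest i hi
      simp [Function.update_of_ne hi]
      omega
  have hj1 : (x j - y j).natAbs = 1 := by
    have hsum : (∑ i, (x i - y i).natAbs) = 1 := h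
    have he : (x j - y j).natAbs + ∑ k ∈ Finset.univ.erase j, (x k - y k).natAbs
        = ∑ k, (x k - y k).natAbs := Finset.add_sum_erase _ (fun k => (x k - y k).natAbs) (Finset.mem_univ j)
    have hz : ∑ k ∈ Finset.univ.erase j, (x k - y k).natAbs = 0 :=
      Finset.sum_eq_zero fun k hk => hrest k (Finset.mem_erase.1 hk).1
    omega
  have : y j = x j + 1 ∨ y j = x j + (-1) := by omega
  rcases this with hv | hv
  · exact Finset.mem_image.2 ⟨(j, true), Finset.mem_univ _, by rw [hyeq, hv]; simp⟩
  · exact Finset.mem_image.2 ⟨(j, false), Finset.mem_univ _, by rw [hyeq, hv]; simp⟩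

lemma nbr_inj (x : Fin d → ℤ) : ∀ p ∈ (Finset.univ : Finset (Fin d × Bool)),
    ∀ q ∈ (Finset.univ : Finset (Fin d × Bool)),
    Function.update x p.1 (x p.1 + if p.2 then 1 else -1) =
      Function.update x q.1 (x q.1 + if q.2 then 1 else -1) → p = q := by
  rintro ⟨i, b⟩ - ⟨i', b'⟩ - h
  by_cases hii : i = i'
  · subst hii
    have := congrFun h i
    simp at this
    cases b <;> cases b' <;> simp_all <;> omega
  · have h1 := congrFun h i
    rw [Function.update_self, Function.update_of_ne hii] at h1
    cases b <;> simp at h1 <;> omega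

lemma sum_nbr (x : Fin d → ℤ) (f : (Fin d → ℤ) → ℤ) :
    ∑ y ∈ nbr x, f y = ∑ p : Fin d × Bool,
      f (Function.update x p.1 (x p.1 + if p.2 then 1 else -1)) := by
  rw [nbr, Finset.sum_image (nbr_inj x)]

lemma card_nbr (x : Fin d → ℤ) : (nbr x).card = 2 * d := by
  rw [nbr, Finset.card_image_of_injOn (nbr_inj x)]
  simp [Finset.card_univ]
  ring

lemma sum_nbr_sq (x : Fin d → ℤ) : ∑ y ∈ nbr x, sq y = 2*d*(sq x) + 2*d := by
  rw [sum_nbr]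
  rw [Fintype.sum_prod_type]
  have : ∀ j : Fin d, ∑ b : Bool, sq (Function.update x j (x j + if b then 1 else -1))
      = 2 * sq x + 2 := by
    intro j
    simp [sq_update]
    ring
  rw [Finset.sum_congr rfl (fun j _ => this j)]
  simp [Finset.sum_const, Finset.card_univ]
  ring

def B (V : Finset (Fin d → ℤ)) : ℕ := V.sup fun z => (sq z).toNat

def wt (V : Finset (Fin d → ℤ)) (x : Fin d → ℤ) : ℕ :=
  (3 * (B V : ℤ) + 3 - sq x).toNat

lemma sq_le_of_mem {V : Finset (Fin d → ℤ)} {x : Fin d → ℤ} (hx : x ∈ V) :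
    sq x ≤ (B V : ℤ) := by
  have h1 : (sq x).toNat ≤ B V := Finset.le_sup (f := fun z => (sq z).toNat) hx
  have := sq_nonneg' x
  omega

lemma wt_eq {V : Finset (Fin d → ℤ)} {x : Fin d → ℤ} (hx : x ∈ V) :
    (wt V x : ℤ) = 3 * (B V : ℤ) + 3 - sq x := by
  have := sq_le_of_mem hx
  rw [wt, Int.toNat_of_nonneg (by linarith)]

lemma sq_nbr_le {V : Finset (Fin d → ℤ)} {x y : Fin d → ℤ} (hx : x ∈ V) (hy : y ∈ nbr x) :
    sq y ≤ 3 * (B V : ℤ) + 3 := by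
  obtain ⟨⟨j, b⟩, -, rfl⟩ := Finset.mem_image.1 hy
  have hB := sq_le_of_mem hx
  have hj2 : x j ^ 2 ≤ sq x :=
    Finset.single_le_sum (f := fun i => (x i)^2) (fun i _ => sq_nonneg _) (Finset.mem_univ j)
  rw [sq_update]
  cases b <;> simp <;> nlinarith [sq_nonneg (x j + 1), sq_nonneg (x j - 1)]

lemma wt_nbr_eq {V : Finset (Fin d → ℤ)} {x y : Fin d → ℤ} (hx : x ∈ V) (hy : y ∈ nbr x) :
    (wt V y : ℤ) = 3 * (B V : ℤ) + 3 - sq y := by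
  have := sq_nbr_le hx hy
  rw [wt, Int.toNat_of_nonneg (by linarith)]

lemma key {V : Finset (Fin d → ℤ)} {x : Fin d → ℤ} (hx : x ∈ V) :
    (∑ y ∈ V.filter (fun y => adj d x y), (wt V y : ℤ)) + 2*d ≤ 2*d*(wt V x : ℤ) := by
  have hsub : V.filter (fun y => adj d x y) ⊆ nbr x := by
    intro y hy
    exact mem_nbr_of_adj (Finset.mem_filter.1 hy).2
  have h1 : (∑ y ∈ V.filter (fun y => adj d x y), (wt V y : ℤ)) ≤ ∑ y ∈ nbr x, (wt V y : ℤ) :=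
    Finset.sum_le_sum_of_subset_of_nonneg hsub (fun y _ _ => Int.ofNat_nonneg _)
  have h2 : ∑ y ∈ nbr x, (wt V y : ℤ) = ∑ y ∈ nbr x, (3 * (B V : ℤ) + 3 - sq y) :=
    Finset.sum_congr rfl fun y hy => wt_nbr_eq hx hy
  have h3 : ∑ y ∈ nbr x, (3 * (B V : ℤ) + 3 - sq y)
      = (nbr x).card * (3 * (B V : ℤ) + 3) - (2*d*(sq x) + 2*d) := by
    rw [Finset.sum_sub_distrib, Finset.sum_const, sum_nbr_sq]
    simp [nsmul_eq_mul]
  rw [card_nbr] at h3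
  have h4 := wt_eq hx
  push_cast at h3 ⊢
  rw [h4]
  linarith [h1, h2.symm ▸ h3]
lemma lapV_add (V : Finset (Fin d → ℤ)) (a b : (Fin d → ℤ) → ℕ) (x : Fin d → ℤ) :
    lapV d V (fun y => a y + b y) x = lapV d V a x + lapV d V b x := by
  simp only [lapV, Nat.cast_add, Finset.sum_add_distrib]
  ring

lemma lapV_ind {V : Finset (Fin d → ℤ)} {x : Fin d → ℤ} (hx : x ∈ V) (y : Fin d → ℤ) :
    lapV d V (fun z => if z = x then 1 else 0) y
      = 2*d*(if y = x then 1 else 0) - (if adj d x y then 1 else 0) := by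
  unfold lapV
  simp only [apply_ite (fun n : ℕ => (n : ℤ)), Nat.cast_one, Nat.cast_zero]
  rw [Finset.sum_ite_eq' _ x (fun _ => (1:ℤ))]
  simp only [Finset.mem_filter, hx, true_and]
  by_cases h : adj d y x
  · simp [h, (adj_comm x y).2 h]
  · have h2 : ¬ adj d x y := fun hq => h ((adj_comm x y).1 hq)
    simp [h, h2, mul_ite]

lemma exists_stabilizes (hd : 1 ≤ d) (V : Finset (Fin d → ℤ)) (η : (Fin d → ℤ) → ℕ) :
    ∃ m, Stabilizes d V η m := by
  suffices H : ∀ n η, (∑ y ∈ V, η y * wt V y) < n → ∃ m, Stabilizes d V η m from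
    H _ η (Nat.lt_succ_self _)
  intro n
  induction n with
  | zero => exact fun η h => absurd h (Nat.not_lt_zero _)
  | succ n ih =>
    intro η hΦ
    by_cases hstab : ∀ x ∈ V, η x ≤ 2*d
    · refine ⟨fun _ => 0, fun x hx => ?_⟩
      have := hstab x hx
      simp only [lapV, Nat.cast_zero, mul_zero, Finset.sum_const_zero, sub_zero]
      push_cast
      omega
    · push_neg at hstab
      obtain ⟨x, hxV, hxbig⟩ := hstab
      set η' : (Fin d → ℤ) → ℕ :=
        fun y => if y = x then η y - 2*d else if adj d x y then η y + 1 else η y with hη'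
      have hcast : ∀ y, (η' y : ℤ)
          = (η y : ℤ) + (if y = x then -(2*(d:ℤ)) else 0) + (if adj d x y then 1 else 0) := by
        intro y
        by_cases hyx : y = x
        · subst hyx
          simp only [hη', if_pos rfl, adj_irrefl y, if_neg (adj_irrefl y)]
          push_cast [Nat.cast_sub hxbig.le]
          ring
        · by_cases h2 : adj d x y <;> simp [hη', hyx, h2]
      have hΦ' : (∑ y ∈ V, η' y * wt V y) < n := by
        have hZ : (∑ y ∈ V, (η' y : ℤ) * wt V y) + 2*d ≤ ∑ y ∈ V, (η y : ℤ) * wt V y := by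
          have e1 : ∑ y ∈ V, (η' y : ℤ) * wt V y
              = ∑ y ∈ V, (η y : ℤ) * wt V y
                + ∑ y ∈ V, (if y = x then -(2*(d:ℤ)) else 0) * wt V y
                + ∑ y ∈ V, (if adj d x y then (1:ℤ) else 0) * wt V y := by
            rw [← Finset.sum_add_distrib, ← Finset.sum_add_distrib]
            exact Finset.sum_congr rfl fun y _ => by rw [hcast y]; ring
          have e2 : ∑ y ∈ V, (if y = x then -(2*(d:ℤ)) else 0) * wt V y
              = -(2*(d:ℤ)) * wt V x := by
            rw [Finset.sum_congr rfl (fun y _ => by rw [ite_mul, zero_mul])]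
            rw [Finset.sum_ite_eq' V x (fun y => -(2*(d:ℤ)) * wt V y), if_pos hxV]
          have e3 : ∑ y ∈ V, (if adj d x y then (1:ℤ) else 0) * wt V y
              = ∑ y ∈ V.filter (fun y => adj d x y), (wt V y : ℤ) := by
            rw [Finset.sum_filter]
            exact Finset.sum_congr rfl fun y _ => by rw [ite_mul, zero_mul, one_mul]
          have := key hxV
          rw [e1, e2, e3]
          linarith
        have hcst : ((∑ y ∈ V, η' y * wt V y : ℕ) : ℤ) + 2*d ≤ ((∑ y ∈ V, η y * wt V y : ℕ) : ℤ) := by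
          push_cast
          exact hZ
        omega
      obtain ⟨m', hm'⟩ := ih η' hΦ'
      refine ⟨fun y => m' y + (if y = x then 1 else 0), ?_⟩
      intro y hyV
      have hlap := lapV_add V m' (fun z => if z = x then 1 else 0) y
      have h2 := hm' y hyV
      have h3 : (η' y : ℤ) = (η y : ℤ) - lapV d V (fun z => if z = x then 1 else 0) y := by
        rw [hcast y, lapV_ind hxV y]
        split_ifs <;> ring
      have : lapV d V (fun y => m' y + if y = x then 1 else 0) y
          = lapV d V m' y + lapV d V (fun z => if z = x then 1 else 0) y := hlap
      rw [this]
      linarith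

lemma stabilizes_min {V : Finset (Fin d → ℤ)} {η m1 m2 : (Fin d → ℤ) → ℕ}
    (h1 : Stabilizes d V η m1) (h2 : Stabilizes d V η m2) :
    Stabilizes d V η (fun y => min (m1 y) (m2 y)) := by
  intro x hx
  rcases le_total (m1 x) (m2 x) with hle | hle
  · have hs : ∑ y ∈ V.filter (fun y => adj d x y), ((min (m1 y) (m2 y) : ℕ) : ℤ)
        ≤ ∑ y ∈ V.filter (fun y => adj d x y), (m1 y : ℤ) :=
      Finset.sum_le_sum fun y _ => by exact_mod_cast min_le_left _ _
    have := h1 x hx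
    simp only [lapV] at this ⊢
    rw [min_eq_left hle]
    linarith
  · have hs : ∑ y ∈ V.filter (fun y => adj d x y), ((min (m1 y) (m2 y) : ℕ) : ℤ)
        ≤ ∑ y ∈ V.filter (fun y => adj d x y), (m2 y : ℤ) :=
      Finset.sum_le_sum fun y _ => by exact_mod_cast min_le_right _ _
    have := h2 x hx
    simp only [lapV] at this ⊢
    rw [min_eq_right hle]
    linarith

lemma exists_isMinStab (hd : 1 ≤ d) (V : Finset (Fin d → ℤ)) (η : (Fin d → ℤ) → ℕ) :
    ∃ m, IsMinStab d V η m := by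
  obtain ⟨m0, hm0⟩ := exists_stabilizes hd V η
  set A : Set ℕ := {n | ∃ m, Stabilizes d V η m ∧ ∑ x ∈ V, m x = n} with hA
  have hAne : A.Nonempty := ⟨_, m0, hm0, rfl⟩
  obtain ⟨m, hm, hsum⟩ := Nat.sInf_mem hAne
  refine ⟨m, hm, ?_⟩
  intro m' hm' x hx
  by_contra hlt
  push_neg at hlt
  have hmin := stabilizes_min hm hm'
  have hlt2 : ∑ y ∈ V, min (m y) (m' y) < ∑ y ∈ V, m y := by
    apply Finset.sum_lt_sum (fun y _ => min_le_left _ _)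
    exact ⟨x, hx, by omega⟩
  have : sInf A ≤ ∑ y ∈ V, min (m y) (m' y) :=
    Nat.sInf_le ⟨_, hmin, rfl⟩
  omega

lemma stabilizable_mono (hd : 1 ≤ d) {ξ η : (Fin d → ℤ) → ℕ} (hle : ∀ x, ξ x ≤ η x)
    (hη : Stabilizable d η) : Stabilizable d ξ := by
  intro x
  obtain ⟨C, hC⟩ := hη x
  refine ⟨C, fun V m hm hx => ?_⟩
  obtain ⟨m', hm'⟩ := exists_isMinStab hd V η
  have hm'ξ : Stabilizes d V ξ m' := by
    intro y hy
    have := hm'.1 y hy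
    have := hle y
    have : (ξ y : ℤ) ≤ η y := by exact_mod_cast hle y
    linarith [hm'.1 y hy]
  exact le_trans (hm.2 m' hm'ξ x hx) (hC V m' hm' hx)

lemma measurable_cyl (V : Finset (Fin d → ℤ)) (S : Set ((Fin d → ℤ) → ℕ))
    (hS : ∀ η η', (∀ x ∈ V, η x = η' x) → η ∈ S → η' ∈ S) : MeasurableSet S := by
  set r : ((Fin d → ℤ) → ℕ) → (V → ℕ) := fun η x => η (x : Fin d → ℤ) with hr
  have hrm : Measurable r := measurable_pi_lambda _ (fun x => measurable_pi_apply _)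
  have hSeq : S = r ⁻¹' (r '' S) := by
    apply subset_antisymm (Set.subset_preimage_image r S)
    rintro η ⟨η', hη'S, heq⟩
    exact hS η' η (fun x hx => congrFun heq ⟨x, hx⟩) hη'S
  rw [hSeq]
  exact hrm (Set.to_countable _).measurableSet

lemma stabilizes_congr {V : Finset (Fin d → ℤ)} {η η' m : (Fin d → ℤ) → ℕ}
    (h : ∀ x ∈ V, η x = η' x) (hs : Stabilizes d V η m) : Stabilizes d V η' m := by
  intro x hx
  rw [← h x hx]
  exact hs x hx

lemma isMinStab_congr {V : Finset (Fin d → ℤ)} {η η' m : (Fin d → ℤ) → ℕ}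
    (h : ∀ x ∈ V, η x = η' x) (hs : IsMinStab d V η m) : IsMinStab d V η' m :=
  ⟨stabilizes_congr h hs.1,
   fun m' hm' => hs.2 m' (stabilizes_congr (fun x hx => (h x hx).symm) hm')⟩

lemma measurableSet_stabSet : MeasurableSet (StabSet d) := by
  have heq : StabSet d = ⋂ x : Fin d → ℤ, ⋃ C : ℕ, ⋂ V : Finset (Fin d → ℤ),
      {η | ∀ m, IsMinStab d V η m → x ∈ V → m x ≤ C} := by
    ext η
    simp only [StabSet, Stabilizable, Set.mem_setOf_eq, Set.mem_iInter, Set.mem_iUnion]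
  rw [heq]
  refine MeasurableSet.iInter fun x => MeasurableSet.iUnion fun C =>
    MeasurableSet.iInter fun V => ?_
  apply measurable_cyl V
  intro η η' hηη' hmem m hm hx
  exact hmem m (isMinStab_congr (fun z hz => (hηη' z hz).symm) hm) hx

theorem main (d : ℕ) (hd : 1 ≤ d)
    (μ ν : Measure ((Fin d → ℤ) → ℕ)) [IsProbabilityMeasure μ] [IsProbabilityMeasure ν]
    (P : Measure (((Fin d → ℤ) → ℕ) × ((Fin d → ℤ) → ℕ))) [IsProbabilityMeasure P]
    (h1 : P.map Prod.fst = ν) (h2 : P.map Prod.snd = μ)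
    (hord : P {q | ∀ x, q.1 x ≤ q.2 x} = 1)
    (hμstab : μ (StabSet d) = 1) : ν (StabSet d) = 1 := by
  have hmeas : MeasurableSet (StabSet d) := measurableSet_stabSet
  set E : Set (((Fin d → ℤ) → ℕ) × ((Fin d → ℤ) → ℕ)) := {q | ∀ x, q.1 x ≤ q.2 x} with hE
  have hEmeas : MeasurableSet E := by
    have : E = ⋂ x : Fin d → ℤ, {q : ((Fin d → ℤ) → ℕ) × ((Fin d → ℤ) → ℕ) | q.1 x ≤ q.2 x} := by
      ext q; simp [hE]
    rw [this]
    refine MeasurableSet.iInter fun x => ?_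
    have hmap : Measurable fun q : ((Fin d → ℤ) → ℕ) × ((Fin d → ℤ) → ℕ) => (q.1 x, q.2 x) :=
      Measurable.prod ((measurable_pi_apply x).comp measurable_fst)
        ((measurable_pi_apply x).comp measurable_snd)
    exact hmap ((Set.to_countable {p : ℕ × ℕ | p.1 ≤ p.2}).measurableSet)
  set A : Set (((Fin d → ℤ) → ℕ) × ((Fin d → ℤ) → ℕ)) := Prod.snd ⁻¹' StabSet d with hA
  have hAmeas : MeasurableSet A := measurable_snd hmeas
  have hPA : P A = 1 := by
    rw [hA, ← Measure.map_apply measurable_snd hmeas, h2]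
    exact hμstab
  have hPEA : P (E ∩ A) = 1 := by
    have hcompl : P ((E ∩ A)ᶜ) = 0 := by
      rw [Set.compl_inter]
      refine le_antisymm ?_ zero_le
      calc P (Eᶜ ∪ Aᶜ) ≤ P Eᶜ + P Aᶜ := measure_union_le _ _
        _ = 0 := by
          rw [prob_compl_eq_zero_iff hEmeas |>.2 hord, prob_compl_eq_zero_iff hAmeas |>.2 hPA]
          simp
    have := prob_compl_eq_zero_iff (hEmeas.inter hAmeas) |>.1 hcompl
    exact this
  have hsub : E ∩ A ⊆ Prod.fst ⁻¹' StabSet d := by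
    rintro ⟨ξ, η⟩ ⟨hle, hstab⟩
    exact stabilizable_mono hd hle hstab
  rw [← h1, Measure.map_apply measurable_fst hmeas]
  refine le_antisymm prob_le_one ?_
  calc (1 : ENNReal) = P (E ∩ A) := hPEA.symm
    _ ≤ P (Prod.fst ⁻¹' StabSet d) := measure_mono hsub
end SandpileAux

/-- if `ν ≤ μ` in the sense that there is a coupling concentrated on
`{(ξ,η) : ξ ≤ η}`, and `μ` is stabilizable, then `ν` is stabilizable. -/
theorem stabilizable_of_stochastically_dominated (d : ℕ) (hd : 1 ≤ d)
    (μ ν : Measure ((Fin d → ℤ) → ℕ)) [IsProbabilityMeasure μ] [IsProbabilityMeasure ν]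
    (hμH : μ (Heights d) = 1) (hνH : ν (Heights d) = 1)
    (P : Measure (((Fin d → ℤ) → ℕ) × ((Fin d → ℤ) → ℕ))) [IsProbabilityMeasure P]
    (h1 : P.map Prod.fst = ν) (h2 : P.map Prod.snd = μ)
    (hord : P {q | ∀ x, q.1 x ≤ q.2 x} = 1)
    (hμstab : μ (StabSet d) = 1) : ν (StabSet d) = 1 := by
  have hmeas : MeasurableSet (StabSet d) := SandpileAux.measurableSet_stabSet
  set E : Set (((Fin d → ℤ) → ℕ) × ((Fin d → ℤ) → ℕ)) := {q | ∀ x, q.1 x ≤ q.2 x} with hE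
  have hEmeas : MeasurableSet E := by
    have : E = ⋂ x : Fin d → ℤ, {q : ((Fin d → ℤ) → ℕ) × ((Fin d → ℤ) → ℕ) | q.1 x ≤ q.2 x} := by
      ext q; simp [hE]
    rw [this]
    refine MeasurableSet.iInter fun x => ?_
    have hmap : Measurable fun q : ((Fin d → ℤ) → ℕ) × ((Fin d → ℤ) → ℕ) => (q.1 x, q.2 x) :=
      Measurable.prod ((measurable_pi_apply x).comp measurable_fst)
        ((measurable_pi_apply x).comp measurable_snd)
    exact hmap ((Set.to_countable {p : ℕ × ℕ | p.1 ≤ p.2}).measurableSet)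
  set A : Set (((Fin d → ℤ) → ℕ) × ((Fin d → ℤ) → ℕ)) := Prod.snd ⁻¹' StabSet d with hA
  have hAmeas : MeasurableSet A := measurable_snd hmeas
  have hPA : P A = 1 := by
    rw [hA, ← Measure.map_apply measurable_snd hmeas, h2]
    exact hμstab
  have hPEA : P (E ∩ A) = 1 := by
    have hcompl : P ((E ∩ A)ᶜ) = 0 := by
      rw [Set.compl_inter]
      refine le_antisymm ?_ zero_le
      calc P (Eᶜ ∪ Aᶜ) ≤ P Eᶜ + P Aᶜ := measure_union_le _ _
        _ = 0 := by
          rw [prob_compl_eq_zero_iff hEmeas |>.2 hord, prob_compl_eq_zero_iff hAmeas |>.2 hPA]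
          simp
    exact prob_compl_eq_zero_iff (hEmeas.inter hAmeas) |>.1 hcompl
  have hsub : E ∩ A ⊆ Prod.fst ⁻¹' StabSet d := by
    rintro ⟨ξ, η⟩ ⟨hle, hstab⟩
    exact SandpileAux.stabilizable_mono hd hle hstab
  rw [← h1, Measure.map_apply measurable_fst hmeas]
  refine le_antisymm prob_le_one ?_
  calc (1 : ENNReal) = P (E ∩ A) := hPEA.symm
    _ ≤ P (Prod.fst ⁻¹' StabSet d) := measure_mono hsub
end

section
/- Let d = 1 and let ν be a stationary, ergodic probability measure on height configurations η : ℤ → {1,2,3,…}. If ∫ η(0) dν < 2 then ν is stabilizable, and if ∫ η(0) dν > 2 then ν is not stabilizable. -/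
open MeasureTheory
open scoped ENNReal

namespace D1

/-- The embedding of `ℤ` as sites in `Fin 1 → ℤ`. -/
def site (t : ℤ) : Fin 1 → ℤ := fun _ => t

lemma site_inj : Function.Injective site := fun a b h => congrFun h 0

lemma eq_site (x : Fin 1 → ℤ) : x = site (x 0) := by
  funext i
  have h : i = 0 := Subsingleton.elim _ _
  rw [h]; rfl

lemma site_zero_apply (t : ℤ) : site t 0 = t := rfl

lemma adj_iff {x y : Fin 1 → ℤ} : adj 1 x y ↔ y = site (x 0 + 1) ∨ y = site (x 0 - 1) := by
  unfold adj
  rw [Fin.sum_univ_one]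
  constructor
  · intro h
    rcases Int.natAbs_eq_iff.mp h with h1 | h1
    · right; rw [eq_site y]
      have hy : y 0 = x 0 - 1 := by omega
      rw [hy]
    · left; rw [eq_site y]
      have hy : y 0 = x 0 + 1 := by omega
      rw [hy]
  · rintro (rfl | rfl) <;> simp [site] <;> omega

lemma filter_adj_subset (V : Finset (Fin 1 → ℤ)) (x : Fin 1 → ℤ) :
    V.filter (fun y => adj 1 x y) ⊆ {site (x 0 + 1), site (x 0 - 1)} := by
  intro y hy
  rcases Finset.mem_filter.mp hy with ⟨_, h⟩
  rcases adj_iff.mp h with rfl | rfl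
  · exact Finset.mem_insert_self _ _
  · exact Finset.mem_insert_of_mem (Finset.mem_singleton_self _)

lemma site_ne (a b : ℤ) (h : a ≠ b) : site a ≠ site b := fun hc => h (site_inj hc)

lemma lapV_ge (V : Finset (Fin 1 → ℤ)) (m : (Fin 1 → ℤ) → ℕ) (x : Fin 1 → ℤ) :
    2 * (m x : ℤ) - (m (site (x 0 + 1)) : ℤ) - (m (site (x 0 - 1)) : ℤ) ≤ lapV 1 V m x := by
  unfold lapV
  have hsub := filter_adj_subset V x
  have hsum : ∑ y ∈ V.filter (fun y => adj 1 x y), (m y : ℤ) ≤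
      ∑ y ∈ ({site (x 0 + 1), site (x 0 - 1)} : Finset (Fin 1 → ℤ)), (m y : ℤ) := by
    apply Finset.sum_le_sum_of_subset_of_nonneg hsub
    intro i _ _; positivity
  have hpair : ∑ y ∈ ({site (x 0 + 1), site (x 0 - 1)} : Finset (Fin 1 → ℤ)), (m y : ℤ)
      = (m (site (x 0 + 1)) : ℤ) + (m (site (x 0 - 1)) : ℤ) := by
    rw [Finset.sum_pair (site_ne _ _ (by omega))]
  push_cast
  omega

lemma lapV_interior (V : Finset (Fin 1 → ℤ)) (m : (Fin 1 → ℤ) → ℕ) (t : ℤ)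
    (h1 : site (t + 1) ∈ V) (h2 : site (t - 1) ∈ V) :
    lapV 1 V m (site t) = 2 * (m (site t) : ℤ) - (m (site (t + 1)) : ℤ) - (m (site (t - 1)) : ℤ) := by
  unfold lapV
  have hfil : V.filter (fun y => adj 1 (site t) y) = {site (t + 1), site (t - 1)} := by
    apply Finset.ext
    intro y
    simp only [Finset.mem_filter, Finset.mem_insert, Finset.mem_singleton]
    constructor
    · rintro ⟨_, h⟩
      rcases adj_iff.mp h with rfl | rfl
      · left; rfl
      · right; rfl
    · rintro (rfl | rfl)
      · exact ⟨h1, adj_iff.mpr (Or.inl rfl)⟩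
      · exact ⟨h2, adj_iff.mpr (Or.inr rfl)⟩
  rw [hfil, Finset.sum_pair (site_ne _ _ (by omega))]
  push_cast
  ring

lemma Ico_succ_top (a b : ℤ) (h : a ≤ b) :
    Finset.Ico a (b + 1) = insert b (Finset.Ico a b) := by
  apply Finset.ext; intro t
  simp only [Finset.mem_Ico, Finset.mem_insert]
  omega

lemma int_telescope (F : ℤ → ℤ) (a : ℤ) : ∀ b : ℤ, a ≤ b →
    ∑ t ∈ Finset.Ico a b, (F (t + 1) - F t) = F b - F a := by
  refine Int.le_induction
    (motive := fun b _ => ∑ t ∈ Finset.Ico a b, (F (t + 1) - F t) = F b - F a) ?_ ?_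
  · simp
  · intro n hn ih
    rw [Ico_succ_top a n hn, Finset.sum_insert (by simp), ih]
    ring

/-- Two-sided cumulative sum of `g : ℤ → ℤ`. -/
noncomputable def cum (g : ℤ → ℤ) (x : ℤ) : ℤ :=
  if 0 ≤ x then ∑ t ∈ Finset.Ico 0 x, g t else -∑ t ∈ Finset.Ico x 0, g t

lemma cum_succ_sub (g : ℤ → ℤ) (x : ℤ) : cum g (x + 1) - cum g x = g x := by
  unfold cum
  rcases le_or_gt 0 x with h | h
  · rw [if_pos h, if_pos (by omega), Ico_succ_top 0 x h, Finset.sum_insert (by simp)]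
    ring
  · rcases eq_or_lt_of_le (by omega : x ≤ -1) with h1 | h1
    · subst h1
      rw [if_pos (by omega), if_neg (by omega)]
      have : Finset.Ico (-1 : ℤ) 0 = {(-1 : ℤ)} := by
        apply Finset.ext; intro t
        simp only [Finset.mem_Ico, Finset.mem_singleton]; omega
      simp [this]
    · rw [if_neg (by omega), if_neg (by omega)]
      have : Finset.Ico x 0 = insert x (Finset.Ico (x + 1) 0) := by
        apply Finset.ext; intro t
        simp only [Finset.mem_Ico, Finset.mem_insert]; omega
      rw [this, Finset.sum_insert (by simp)]
      ring

lemma cum_sub (g : ℤ → ℤ) {a b : ℤ} (hab : a ≤ b) :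
    cum g b - cum g a = ∑ t ∈ Finset.Ico a b, g t := by
  have := int_telescope (cum g) a b hab
  rw [← this]
  apply Finset.sum_congr rfl
  intro t _
  exact cum_succ_sub g t

lemma telescope_sub (F : ℤ → ℤ) {a b : ℤ} (hab : a ≤ b) :
    ∑ t ∈ Finset.Ico a b, (F (t + 1) - F t) = F b - F a := int_telescope F a b hab

end D1


namespace D1

/-- Cumulative excess height `P x = Σ_{0 ≤ t < x} (η(t) - 2)` (two-sided). -/
noncomputable def Pfun (η : (Fin 1 → ℤ) → ℕ) : ℤ → ℤ := cum (fun t => (η (site t) : ℤ) - 2)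

noncomputable def Gfun (η : (Fin 1 → ℤ) → ℕ) : ℤ → ℤ := fun t => - Pfun η (t + 1)

noncomputable def Hfun (η : (Fin 1 → ℤ) → ℕ) : ℤ → ℤ := cum (Gfun η)

lemma Hfun_lap (η : (Fin 1 → ℤ) → ℕ) (t : ℤ) :
    2 * Hfun η t - Hfun η (t - 1) - Hfun η (t + 1) = (η (site t) : ℤ) - 2 := by
  have h1 : Hfun η t - Hfun η (t - 1) = Gfun η (t - 1) := by
    have := cum_succ_sub (Gfun η) (t - 1)
    simpa [Hfun] using this
  have h2 : Hfun η (t + 1) - Hfun η t = Gfun η t := cum_succ_sub (Gfun η) t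
  have h3 : Pfun η (t + 1) - Pfun η t = (η (site t) : ℤ) - 2 :=
    cum_succ_sub (fun t => (η (site t) : ℤ) - 2) t
  have h4 : Gfun η (t - 1) = - Pfun η t := by
    unfold Gfun; congr 1; ring_nf
  unfold Gfun at h2
  omega

lemma stabilizable_of_drift (η : (Fin 1 → ℤ) → ℕ)
    (h₁ : ∃ T : ℤ, ∀ t ≥ T, Pfun η t ≤ 0) (h₂ : ∃ T : ℤ, ∀ t ≤ T, 0 ≤ Pfun η t) :
    Stabilizable 1 η := by
  obtain ⟨T1', hT1⟩ := h₁
  obtain ⟨T2', hT2⟩ := h₂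
  -- G is eventually nonneg at +∞ and eventually nonpos at -∞
  have hGpos : ∀ t ≥ T1', 0 ≤ Gfun η t := by
    intro t ht
    have := hT1 (t + 1) (by omega)
    unfold Gfun; omega
  have hGneg : ∀ t ≤ T2' - 1, Gfun η t ≤ 0 := by
    intro t ht
    have := hT2 (t + 1) (by omega)
    unfold Gfun; omega
  set T1 := max T1' (T2' - 1) with hT1def
  set T2 := T2' - 1 with hT2def
  have hT21 : T2 ≤ T1 := le_max_right _ _
  have hne : (Finset.Icc T2 T1).Nonempty := Finset.nonempty_Icc.mpr hT21
  set K := (Finset.Icc T2 T1).inf' hne (Hfun η) with hKdef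
  have hK : ∀ x : ℤ, K ≤ Hfun η x := by
    intro x
    rcases le_total x T2 with hx | hx
    · have hsum : Hfun η T2 - Hfun η x = ∑ t ∈ Finset.Ico x T2, Gfun η t :=
        cum_sub (Gfun η) hx
      have hle : ∑ t ∈ Finset.Ico x T2, Gfun η t ≤ 0 := by
        apply Finset.sum_nonpos
        intro t ht
        exact hGneg t (by have := (Finset.mem_Ico.mp ht).2; omega)
      have : Hfun η T2 ≤ Hfun η x := by omega
      exact le_trans (Finset.inf'_le _ (Finset.mem_Icc.mpr ⟨le_refl _, hT21⟩)) this
    · rcases le_total x T1 with hx2 | hx2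
      · exact Finset.inf'_le _ (Finset.mem_Icc.mpr ⟨hx, hx2⟩)
      · have hsum : Hfun η x - Hfun η T1 = ∑ t ∈ Finset.Ico T1 x, Gfun η t :=
          cum_sub (Gfun η) hx2
        have hle : 0 ≤ ∑ t ∈ Finset.Ico T1 x, Gfun η t := by
          apply Finset.sum_nonneg
          intro t ht
          exact hGpos t (le_trans (le_max_left _ _) (Finset.mem_Ico.mp ht).1)
        have : Hfun η T1 ≤ Hfun η x := by omega
        exact le_trans (Finset.inf'_le _ (Finset.mem_Icc.mpr ⟨hT21, le_refl _⟩)) this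
  -- the global toppling function
  set mg : (Fin 1 → ℤ) → ℕ := fun v => (Hfun η (v 0) - K).toNat with hmg
  have hmgval : ∀ v : Fin 1 → ℤ, (mg v : ℤ) = Hfun η (v 0) - K := by
    intro v
    simp only [hmg]
    exact Int.toNat_of_nonneg (by have := hK (v 0); omega)
  have hstab : ∀ V : Finset (Fin 1 → ℤ), Stabilizes 1 V η mg := by
    intro V x hx
    have hlap := lapV_ge V mg x
    have e1 : (mg x : ℤ) = Hfun η (x 0) - K := hmgval x
    have e2 : (mg (site (x 0 + 1)) : ℤ) = Hfun η (x 0 + 1) - K := hmgval _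
    have e3 : (mg (site (x 0 - 1)) : ℤ) = Hfun η (x 0 - 1) - K := hmgval _
    have hΔ := Hfun_lap η (x 0)
    have hηx : η x = η (site (x 0)) := by rw [← eq_site]
    rw [hηx]
    push_cast
    omega
  intro x
  refine ⟨mg x, fun V m hmin hxV => hmin.2 mg (hstab V) x hxV⟩

end D1


namespace D1

lemma lapV_le_of (V : Finset (Fin 1 → ℤ)) (m p : (Fin 1 → ℤ) → ℕ) (x : Fin 1 → ℤ)
    (hx : p x = m x) (hy : ∀ y, p y ≤ m y) : lapV 1 V m x ≤ lapV 1 V p x := by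
  unfold lapV
  have hsum : ∑ y ∈ V.filter (fun y => adj 1 x y), (p y : ℤ)
      ≤ ∑ y ∈ V.filter (fun y => adj 1 x y), (m y : ℤ) := by
    apply Finset.sum_le_sum
    intro i _
    exact_mod_cast hy i
  rw [hx]
  omega

lemma stabilizes_min (V : Finset (Fin 1 → ℤ)) (η m m' : (Fin 1 → ℤ) → ℕ)
    (h : Stabilizes 1 V η m) (h' : Stabilizes 1 V η m') :
    Stabilizes 1 V η (fun y => min (m y) (m' y)) := by
  intro x hx
  rcases le_total (m x) (m' x) with hle | hle
  · have hlap : lapV 1 V m x ≤ lapV 1 V (fun y => min (m y) (m' y)) x :=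
      lapV_le_of V m _ x (min_eq_left hle) (fun y => min_le_left _ _)
    have := h x hx
    omega
  · have hlap : lapV 1 V m' x ≤ lapV 1 V (fun y => min (m y) (m' y)) x :=
      lapV_le_of V m' _ x (min_eq_right hle) (fun y => min_le_right _ _)
    have := h' x hx
    omega

def quadW (R K : ℕ) : (Fin 1 → ℤ) → ℕ := fun v => K * (((R : ℤ) + 1) ^ 2 - (v 0) ^ 2).toNat

lemma quadW_val (R K : ℕ) (v : Fin 1 → ℤ) (h : (v 0).natAbs ≤ R + 1) :
    ((quadW R K v : ℕ) : ℤ) = (K : ℤ) * (((R : ℤ) + 1) ^ 2 - (v 0) ^ 2) := by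
  unfold quadW
  have hl : -((R : ℤ) + 1) ≤ v 0 := by omega
  have hr : v 0 ≤ (R : ℤ) + 1 := by omega
  have h1 : (v 0) ^ 2 ≤ ((R : ℤ) + 1) ^ 2 := sq_le_sq' hl hr
  push_cast
  rw [Int.toNat_of_nonneg (by omega)]

lemma stabilizes_quadW (η : (Fin 1 → ℤ) → ℕ) (V : Finset (Fin 1 → ℤ)) (R K : ℕ)
    (hV : ∀ x ∈ V, (x 0).natAbs ≤ R) (hη : ∀ x ∈ V, η x < K) :
    Stabilizes 1 V η (quadW R K) := by
  intro x hxV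
  have hxR : (x 0).natAbs ≤ R := hV x hxV
  have hlap := lapV_ge V (quadW R K) x
  have e1 : ((quadW R K x : ℕ) : ℤ) = (K : ℤ) * (((R : ℤ) + 1) ^ 2 - (x 0) ^ 2) :=
    quadW_val R K x (by omega)
  have e2 : ((quadW R K (site (x 0 + 1)) : ℕ) : ℤ)
      = (K : ℤ) * (((R : ℤ) + 1) ^ 2 - (x 0 + 1) ^ 2) := by
    have h := quadW_val R K (site (x 0 + 1)) (by rw [site_zero_apply]; omega)
    rwa [site_zero_apply] at h
  have e3 : ((quadW R K (site (x 0 - 1)) : ℕ) : ℤ)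
      = (K : ℤ) * (((R : ℤ) + 1) ^ 2 - (x 0 - 1) ^ 2) := by
    have h := quadW_val R K (site (x 0 - 1)) (by rw [site_zero_apply]; omega)
    rwa [site_zero_apply] at h
  have key : 2 * ((K : ℤ) * (((R : ℤ) + 1) ^ 2 - (x 0) ^ 2))
      - (K : ℤ) * (((R : ℤ) + 1) ^ 2 - (x 0 + 1) ^ 2)
      - (K : ℤ) * (((R : ℤ) + 1) ^ 2 - (x 0 - 1) ^ 2) = 2 * K := by ring
  have hηK : (η x : ℤ) ≤ (K : ℤ) - 1 := by
    have := hη x hxV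
    omega
  have hKnn : (0 : ℤ) ≤ (K : ℤ) := by positivity
  push_cast
  rw [e1, e2, e3] at hlap
  linarith

lemma exists_stabilizer (η : (Fin 1 → ℤ) → ℕ) (V : Finset (Fin 1 → ℤ)) :
    ∃ w, Stabilizes 1 V η w := by
  classical
  refine ⟨quadW (V.sup (fun v => (v 0).natAbs)) (V.sup η + 1), stabilizes_quadW η V _ _ ?_ ?_⟩
  · intro x hxV
    exact Finset.le_sup (f := fun v => (v 0).natAbs) hxV
  · intro x hxV
    have : η x ≤ V.sup η := Finset.le_sup hxV
    omega

lemma exists_minstab (η : (Fin 1 → ℤ) → ℕ) (V : Finset (Fin 1 → ℤ)) :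
    ∃ m, IsMinStab 1 V η m := by
  classical
  obtain ⟨w, hw⟩ := exists_stabilizer η V
  set s : Set ℕ := {k | ∃ m, Stabilizes 1 V η m ∧ ∑ x ∈ V, m x = k} with hs_def
  have hs : s.Nonempty := ⟨_, w, hw, rfl⟩
  have hmem := Nat.sInf_mem hs
  obtain ⟨m, hm, hsum⟩ := hmem
  refine ⟨m, hm, ?_⟩
  intro m' hm' x hxV
  by_contra hlt
  push_neg at hlt
  have hp : Stabilizes 1 V η (fun y => min (m y) (m' y)) := stabilizes_min V η m m' hm hm'
  have hple : ∑ y ∈ V, min (m y) (m' y) < ∑ y ∈ V, m y := by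
    apply Finset.sum_lt_sum (fun i _ => min_le_left _ _)
    exact ⟨x, hxV, by omega⟩
  have hmem2 : ∑ y ∈ V, min (m y) (m' y) ∈ s := ⟨_, hp, rfl⟩
  have := Nat.sInf_le hmem2
  omega

end D1


namespace D1

open Filter Topology

section ErgodicLemma

variable {α : Type*} [MeasurableSpace α] {ν : Measure α} [IsProbabilityMeasure ν]
variable {τ : α → α} {q : α → ℝ}

/-- `maxS τ q N x = max_{1 ≤ n ≤ N+1} S_n q x`. -/
def maxS (τ : α → α) (q : α → ℝ) : ℕ → α → ℝ
  | 0, x => q x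
  | (N + 1), x => max (maxS τ q N x) (birkhoffSum τ q (N + 2) x)

lemma maxS_mono (x : α) : Monotone (fun N => maxS τ q N x) := by
  apply monotone_nat_of_le_succ
  intro N
  exact le_max_left _ _

lemma le_maxS (x : α) : ∀ N n, 1 ≤ n → n ≤ N + 1 → birkhoffSum τ q n x ≤ maxS τ q N x := by
  intro N
  induction N with
  | zero =>
    intro n h1 h2
    have : n = 1 := by omega
    subst this
    simp [maxS, birkhoffSum_one]
  | succ N ih =>
    intro n h1 h2
    rcases Nat.lt_or_ge n (N + 2) with h | h
    · exact le_trans (ih n h1 (by omega)) (le_max_left _ _)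
    · have : n = N + 2 := by omega
      subst this
      exact le_max_right _ _

lemma maxS_le (x : α) : ∀ N, ∃ n, 1 ≤ n ∧ n ≤ N + 1 ∧ maxS τ q N x = birkhoffSum τ q n x := by
  intro N
  induction N with
  | zero => exact ⟨1, le_refl _, le_refl _, (birkhoffSum_one τ q x).symm⟩
  | succ N ih =>
    obtain ⟨n, h1, h2, he⟩ := ih
    rcases le_total (maxS τ q N x) (birkhoffSum τ q (N + 2) x) with h | h
    · exact ⟨N + 2, by omega, by omega, max_eq_right h⟩
    · exact ⟨n, h1, by omega, (max_eq_left h).trans he⟩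

lemma maxS_measurable (hτ : Measurable τ) (hq : Measurable q) (N : ℕ) :
    Measurable (maxS τ q N) := by
  have hS : ∀ n, Measurable (birkhoffSum τ q n) := by
    intro n
    apply Finset.measurable_sum
    intro k _
    exact hq.comp (hτ.iterate k)
  induction N with
  | zero => exact hq
  | succ N ih => exact Measurable.max ih (hS (N + 2))

lemma birkhoffSum_integrable (hτ : MeasurePreserving τ ν ν) (hq : Integrable q ν) (n : ℕ) :
    Integrable (birkhoffSum τ q n) ν := by
  apply integrable_finset_sum
  intro k _
  exact ((hτ.iterate k).integrable_comp hq.aestronglyMeasurable).mpr hq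

lemma maxS_integrable (hτ : MeasurePreserving τ ν ν) (hq : Integrable q ν) (N : ℕ) :
    Integrable (maxS τ q N) ν := by
  induction N with
  | zero => exact hq
  | succ N ih => exact ih.sup (birkhoffSum_integrable hτ hq (N + 2))

/-- The key pointwise inequality behind the maximal ergodic theorem. -/
lemma maxS_le_add (x : α) (N : ℕ) :
    maxS τ q N x ≤ q x + max 0 (maxS τ q N (τ x)) := by
  obtain ⟨n, h1, h2, he⟩ := maxS_le (τ := τ) (q := q) x N
  rw [he]
  rcases Nat.exists_eq_add_of_le h1 with ⟨m, rfl⟩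
  rw [add_comm 1 m, birkhoffSum_succ' τ q m x]
  rcases Nat.eq_zero_or_pos m with rfl | hm
  · simp [birkhoffSum_zero]
  · have : birkhoffSum τ q m (τ x) ≤ maxS τ q N (τ x) := le_maxS (τ x) N m hm (by omega)
    have h0 : maxS τ q N (τ x) ≤ max 0 (maxS τ q N (τ x)) := le_max_right _ _
    linarith

/-- Garsia's maximal ergodic theorem. -/
lemma garsia (hτ : MeasurePreserving τ ν ν) (hqm : Measurable q) (hq : Integrable q ν) (N : ℕ) :
    0 ≤ ∫ x in {x | 0 < maxS τ q N x}, q x ∂ν := by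
  set E : Set α := {x | 0 < maxS τ q N x} with hE_def
  have hE : MeasurableSet E := measurableSet_lt measurable_const (maxS_measurable hτ.measurable hqm N)
  set Φ : α → ℝ := fun x => max 0 (maxS τ q N x) with hΦ_def
  have hΦm : Measurable Φ := measurable_const.max (maxS_measurable hτ.measurable hqm N)
  have hΦi : Integrable Φ ν := (integrable_const (0:ℝ)).sup (maxS_integrable hτ hq N)
  have hΦτi : Integrable (fun x => Φ (τ x)) ν :=
    (hτ.integrable_comp hΦi.aestronglyMeasurable).mpr hΦi
  have hΦnn : ∀ x, 0 ≤ Φ x := fun x => le_max_left _ _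
  -- pointwise inequality on E
  have hpt : ∀ x ∈ E, Φ x - Φ (τ x) ≤ q x := by
    intro x hx
    have h1 : Φ x = maxS τ q N x := max_eq_right (le_of_lt hx)
    have h2 := maxS_le_add (τ := τ) (q := q) x N
    rw [h1]
    linarith
  have step1 : ∫ x in E, (Φ x - Φ (τ x)) ∂ν ≤ ∫ x in E, q x ∂ν := by
    apply setIntegral_mono_on (hΦi.integrableOn.sub hΦτi.integrableOn) hq.integrableOn hE hpt
  have step2 : ∫ x in E, (Φ x - Φ (τ x)) ∂ν = ∫ x in E, Φ x ∂ν - ∫ x in E, Φ (τ x) ∂ν :=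
    integral_sub hΦi.integrableOn hΦτi.integrableOn
  have step3 : ∫ x in E, Φ x ∂ν = ∫ x, Φ x ∂ν := by
    rw [← integral_add_compl hE hΦi]
    have : ∫ x in Eᶜ, Φ x ∂ν = 0 := by
      have hcongr : ∀ x ∈ Eᶜ, Φ x = 0 := by
        intro x hx
        have : maxS τ q N x ≤ 0 := le_of_not_gt hx
        exact max_eq_left this
      rw [setIntegral_congr_fun hE.compl hcongr]
      simp
    rw [this]
    ring
  have step4 : ∫ x in E, Φ (τ x) ∂ν ≤ ∫ x, Φ (τ x) ∂ν :=
    setIntegral_le_integral hΦτi (ae_of_all _ (fun x => hΦnn (τ x)))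
  have step5 : ∫ x, Φ (τ x) ∂ν = ∫ x, Φ x ∂ν := by
    conv_rhs => rw [← hτ.map_eq]
    rw [integral_map hτ.measurable.aemeasurable hΦm.aestronglyMeasurable]
  linarith

lemma garsia_limit (hτ : MeasurePreserving τ ν ν) (hqm : Measurable q) (hq : Integrable q ν)
    (h : ∀ᵐ x ∂ν, ∃ N, 0 < maxS τ q N x) : 0 ≤ ∫ x, q x ∂ν := by
  set E : ℕ → Set α := fun N => {x | 0 < maxS τ q N x} with hE_def
  have hEm : ∀ N, MeasurableSet (E N) :=
    fun N => measurableSet_lt measurable_const (maxS_measurable hτ.measurable hqm N)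
  have hmono : Monotone E := by
    intro a b hab x hx
    exact lt_of_lt_of_le hx (maxS_mono x hab)
  have htend : Tendsto (fun N => ∫ x in E N, q x ∂ν) atTop (𝓝 (∫ x in ⋃ N, E N, q x ∂ν)) :=
    tendsto_setIntegral_of_monotone hEm hmono hq.integrableOn
  have hU : ∫ x in ⋃ N, E N, q x ∂ν = ∫ x, q x ∂ν := by
    rw [← integral_add_compl (MeasurableSet.iUnion hEm) hq]
    have hnull : ν ((⋃ N, E N)ᶜ) = 0 := by
      have h2 : {x | ¬ ∃ N, 0 < maxS τ q N x} = (⋃ N, E N)ᶜ := by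
        ext x
        simp [hE_def]
      rw [← h2]
      exact ae_iff.mp h
    have hz : ∫ x in (⋃ N, E N)ᶜ, q x ∂ν = 0 := by
      rw [Measure.restrict_eq_zero.mpr hnull, integral_zero_measure]
    rw [hz, add_zero]
  rw [← hU]
  exact ge_of_tendsto' htend (fun N => garsia hτ hqm hq N)

lemma birkhoffSum_neg' (x : α) (n : ℕ) :
    birkhoffSum τ (fun y => -(q y)) n x = - birkhoffSum τ q n x := by
  unfold birkhoffSum
  rw [← Finset.sum_neg_distrib]

/-- The ergodic lemma: if `∫ q > 0` and strictly `τ`-invariant sets are trivial, then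
almost surely the Birkhoff sums of `q` are bounded below. -/
lemma birkhoff_bddBelow (hτ : MeasurePreserving τ ν ν) (hqm : Measurable q)
    (hq : Integrable q ν) (hpos : 0 < ∫ x, q x ∂ν)
    (htriv : ∀ A : Set α, MeasurableSet A → τ ⁻¹' A = A → ν A = 0 ∨ ν A = 1) :
    ∀ᵐ x ∂ν, ∃ C : ℝ, ∀ n, -C ≤ birkhoffSum τ q n x := by
  classical
  set A : Set α := {x | ∀ C : ℕ, ∃ n, birkhoffSum τ q n x < -(C : ℝ)} with hA_def
  have hSm : ∀ n, Measurable (birkhoffSum τ q n) := by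
    intro n
    apply Finset.measurable_sum
    intro k _
    exact hqm.comp (hτ.measurable.iterate k)
  have hAm : MeasurableSet A := by
    have hAe : A = ⋂ C : ℕ, ⋃ n, {x | birkhoffSum τ q n x < -(C : ℝ)} := by
      ext x
      simp [hA_def]
    rw [hAe]
    apply MeasurableSet.iInter
    intro C
    apply MeasurableSet.iUnion
    intro n
    exact measurableSet_lt (hSm n) measurable_const
  have hAinv : τ ⁻¹' A = A := by
    ext x
    simp only [Set.mem_preimage, hA_def, Set.mem_setOf_eq]
    constructor
    · intro hx C
      obtain ⟨C', hC'⟩ := exists_nat_gt ((C : ℝ) + |q x|)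
      obtain ⟨n, hn⟩ := hx C'
      refine ⟨n + 1, ?_⟩
      rw [birkhoffSum_succ' τ q n x]
      have : q x ≤ |q x| := le_abs_self _
      linarith
    · intro hx C
      obtain ⟨C', hC'⟩ := exists_nat_gt ((C : ℝ) + |q x|)
      obtain ⟨n, hn⟩ := hx C'
      match n, hn with
      | 0, hn =>
        exfalso
        rw [birkhoffSum_zero] at hn
        have h0 : (0:ℝ) ≤ (C' : ℝ) := Nat.cast_nonneg _
        linarith
      | (m+1), hn =>
        refine ⟨m, ?_⟩
        rw [birkhoffSum_succ' τ q m x] at hn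
        have : -|q x| ≤ q x := neg_abs_le _
        linarith
  rcases htriv A hAm hAinv with h0 | h1
  · have hae : ∀ᵐ x ∂ν, x ∉ A := by
      rw [ae_iff]
      simpa [Set.setOf_mem_eq] using h0
    filter_upwards [hae] with x hx
    rw [hA_def, Set.mem_setOf_eq] at hx
    push_neg at hx
    obtain ⟨C, hC⟩ := hx
    exact ⟨C, fun n => hC n⟩
  · exfalso
    set p : α → ℝ := fun y => -(q y) with hp_def
    have hpm : Measurable p := hqm.neg
    have hpi : Integrable p ν := hq.neg
    have hae : ∀ᵐ x ∂ν, x ∈ A := by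
      have hAc : ν Aᶜ = 0 := by
        have hc := measure_compl hAm (measure_ne_top ν A)
        rw [h1, measure_univ] at hc
        simpa using hc
      rw [ae_iff]
      exact hAc
    have hsup : ∀ᵐ x ∂ν, ∃ N, 0 < maxS τ p N x := by
      filter_upwards [hae] with x hx
      obtain ⟨n, hn⟩ := hx 0
      push_cast at hn
      have hn1 : 1 ≤ n := by
        rcases n with _ | m
        · exfalso
          rw [birkhoffSum_zero] at hn
          linarith
        · omega
      refine ⟨n - 1, ?_⟩
      have hS : birkhoffSum τ p n x ≤ maxS τ p (n - 1) x := le_maxS x (n - 1) n hn1 (by omega)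
      have hpos' : 0 < birkhoffSum τ p n x := by
        have he : birkhoffSum τ p n x = - birkhoffSum τ q n x := birkhoffSum_neg' x n
        rw [he]
        linarith
      linarith
    have hint := garsia_limit hτ hpm hpi hsup
    have hneg : ∫ x, p x ∂ν = - ∫ x, q x ∂ν := by
      rw [hp_def]
      exact integral_neg q
    linarith
end ErgodicLemma

end D1


namespace D1

lemma shiftC_apply (z : Fin 1 → ℤ) (η : (Fin 1 → ℤ) → ℕ) (x : Fin 1 → ℤ) :
    shiftC 1 z η x = η (x + z) := rfl

lemma iterate_shift_apply (z : Fin 1 → ℤ) (k : ℕ) (η : (Fin 1 → ℤ) → ℕ) (x : Fin 1 → ℤ) :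
    ((shiftC 1 z)^[k] η) x = η (x + k • z) := by
  induction k generalizing η x with
  | zero => simp
  | succ k ih =>
    rw [Function.iterate_succ_apply, ih (shiftC 1 z η) x, shiftC_apply, succ_nsmul, add_assoc]

lemma smul_site (k : ℕ) (t : ℤ) : k • site t = site (k * t) := by
  funext i
  show k • t = k * t
  rw [nsmul_eq_mul]

lemma neg_site (t : ℤ) : -(site t) = site (-t) := rfl

lemma zero_add_site (t : ℤ) : (0 : Fin 1 → ℤ) + site t = site t := by
  funext i; show 0 + t = t; omega

lemma iterate_shift_zero (t : ℤ) (k : ℕ) (η : (Fin 1 → ℤ) → ℕ) :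
    ((shiftC 1 (site t))^[k] η) 0 = η (site (k * t)) := by
  rw [iterate_shift_apply, smul_site, zero_add_site]

lemma shift_preimage_inv (z : Fin 1 → ℤ) (A : Set ((Fin 1 → ℤ) → ℕ))
    (h : shiftC 1 z ⁻¹' A = A) : shiftC 1 (-z) ⁻¹' A = A := by
  have hcomp : shiftC 1 z ∘ shiftC 1 (-z) = id := by
    funext η x
    show η ((x + z) + -z) = η x
    congr 1
    funext i
    simp
  conv_lhs => rw [← h]
  rw [← Set.preimage_comp, hcomp, Set.preimage_id]

lemma shift_preimage_iter (z : Fin 1 → ℤ) (A : Set ((Fin 1 → ℤ) → ℕ))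
    (h : shiftC 1 z ⁻¹' A = A) (k : ℕ) : shiftC 1 (k • z) ⁻¹' A = A := by
  induction k with
  | zero =>
    have hid : shiftC 1 ((0 : ℕ) • z) = id := by
      funext η x
      show η (x + 0 • z) = η x
      congr 1
      simp
    rw [hid, Set.preimage_id]
  | succ k ih =>
    have hco : shiftC 1 ((k + 1) • z) = shiftC 1 (k • z) ∘ shiftC 1 z := by
      funext η x
      show η (x + (k + 1) • z) = η ((x + k • z) + z)
      congr 1
      rw [succ_nsmul]
      abel
    rw [hco, Set.preimage_comp, ih, h]

lemma triv_of_gen {ν : Measure ((Fin 1 → ℤ) → ℕ)} (herg : ErgodicShift 1 ν) (t : ℤ)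
    (ht : t = 1 ∨ t = -1) :
    ∀ A : Set ((Fin 1 → ℤ) → ℕ), MeasurableSet A → shiftC 1 (site t) ⁻¹' A = A →
      ν A = 0 ∨ ν A = 1 := by
  intro A hAm hAz
  apply herg A hAm
  intro w
  have hw : ∃ k : ℕ, w = k • site t ∨ w = -(k • site t) := by
    refine ⟨(w 0).natAbs, ?_⟩
    rw [smul_site, neg_site]
    rcases ht with rfl | rfl
    · rcases Int.natAbs_eq (w 0) with h | h
      · left
        have hv : (((w 0).natAbs : ℤ) * 1 : ℤ) = w 0 := by omega
        rw [hv]; exact eq_site w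
      · right
        have hv : (-(((w 0).natAbs : ℤ) * 1) : ℤ) = w 0 := by omega
        rw [hv]; exact eq_site w
    · rcases Int.natAbs_eq (w 0) with h | h
      · right
        have hv : (-(((w 0).natAbs : ℤ) * (-1)) : ℤ) = w 0 := by omega
        rw [hv]; exact eq_site w
      · left
        have hv : ((((w 0).natAbs : ℤ)) * (-1) : ℤ) = w 0 := by omega
        rw [hv]; exact eq_site w
  obtain ⟨k, hk | hk⟩ := hw
  · rw [hk]
    exact shift_preimage_iter _ A hAz k
  · rw [hk]
    exact shift_preimage_inv _ A (shift_preimage_iter _ A hAz k)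

lemma sum_Ico_nonneg_int (f : ℤ → ℤ) : ∀ n : ℕ, ∑ t ∈ Finset.Ico (0 : ℤ) (n : ℤ), f t
    = ∑ k ∈ Finset.range n, f k := by
  intro n
  induction n with
  | zero => simp
  | succ n ih =>
    have h1 : ((n : ℤ) + 1) = ((n + 1 : ℕ) : ℤ) := by push_cast; ring
    rw [← h1, Ico_succ_top 0 n (by positivity), Finset.sum_insert (by simp),
      Finset.sum_range_succ, ih]
    ring

lemma sum_Ico_neg_int (f : ℤ → ℤ) : ∀ n : ℕ, ∑ t ∈ Finset.Ico (-(n : ℤ)) 0, f t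
    = ∑ k ∈ Finset.range n, f (-1 - k) := by
  intro n
  induction n with
  | zero => simp
  | succ n ih =>
    have h1 : Finset.Ico (-((n : ℤ) + 1)) 0 = insert (-(n : ℤ) - 1) (Finset.Ico (-(n : ℤ)) 0) := by
      apply Finset.ext
      intro x
      simp only [Finset.mem_Ico, Finset.mem_insert]
      omega
    have h2 : (-((n + 1 : ℕ) : ℤ)) = -((n : ℤ) + 1) := by push_cast; ring
    rw [h2, h1, Finset.sum_insert (by simp only [Finset.mem_Ico]; omega),
      Finset.sum_range_succ, ih]
    have h3 : (-1 - (n : ℤ)) = -(n : ℤ) - 1 := by ring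
    rw [h3]
    ring

end D1


namespace D1

section MeasureSide

variable {ν : Measure ((Fin 1 → ℤ) → ℕ)} [IsProbabilityMeasure ν]

lemma site_add_site (a b : ℤ) : site a + site b = site (a + b) := rfl

lemma eval_measurable (x : Fin 1 → ℤ) (g : ℕ → ℝ) :
    Measurable (fun η : (Fin 1 → ℤ) → ℕ => g (η x)) :=
  (measurable_from_top (f := g)).comp (measurable_pi_apply x)

lemma integral_comp_shift (hstat : Stationary 1 ν) (g : ((Fin 1 → ℤ) → ℕ) → ℝ)
    (hg : AEStronglyMeasurable g ν) (z : Fin 1 → ℤ) :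
    ∫ η, g (shiftC 1 z η) ∂ν = ∫ η, g η ∂ν := by
  conv_rhs => rw [← (hstat z).map_eq]
  rw [integral_map (hstat z).measurable.aemeasurable (by rwa [(hstat z).map_eq])]

lemma eval_shift (z : Fin 1 → ℤ) (η : (Fin 1 → ℤ) → ℕ) :
    (shiftC 1 z η) 0 = η z := by
  rw [shiftC_apply]
  congr 1
  funext i
  show (0 : ℤ) + z i = z i
  omega

/-- Almost surely, forward and backward partial sums of heights grow at most at rate `2 - δ`. -/
lemma dir1_ae_bounds (hstat : Stationary 1 ν) (herg : ErgodicShift 1 ν)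
    (hint : (∫⁻ η, (η 0 : ℝ≥0∞) ∂ν) < 2) :
    ∃ δ : ℝ, 0 < δ ∧
      ((∀ᵐ η ∂ν, ∃ C : ℝ, ∀ n : ℕ,
        (∑ k ∈ Finset.range n, (η (site k) : ℝ)) ≤ (2 - δ) * n + C) ∧
       (∀ᵐ η ∂ν, ∃ C : ℝ, ∀ n : ℕ,
        (∑ k ∈ Finset.range n, (η (site (-1 - k)) : ℝ)) ≤ (2 - δ) * n + C)) := by
  have hm0 : Measurable (fun η : (Fin 1 → ℤ) → ℕ => (η 0 : ℝ)) :=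
    eval_measurable 0 (fun n => (n : ℝ))
  have hfin : (∫⁻ η, (η 0 : ℝ≥0∞) ∂ν) ≠ ⊤ := ne_of_lt (lt_trans hint (by norm_num))
  have hInt : Integrable (fun η : (Fin 1 → ℤ) → ℕ => (η 0 : ℝ)) ν := by
    refine ⟨hm0.aestronglyMeasurable, ?_⟩
    unfold HasFiniteIntegral
    have he : ∀ η : (Fin 1 → ℤ) → ℕ, ‖(η 0 : ℝ)‖ₑ = (η 0 : ℝ≥0∞) := by
      intro η
      norm_num
    rw [lintegral_congr he]
    exact lt_of_le_of_ne le_top hfin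
  set r : ℝ := (∫⁻ η, (η 0 : ℝ≥0∞) ∂ν).toReal with hr_def
  have hIval : ∫ η, (η 0 : ℝ) ∂ν = r := by
    rw [integral_eq_lintegral_of_nonneg_ae (ae_of_all _ (fun η => by positivity))
      hm0.aestronglyMeasurable]
    congr 1
    apply lintegral_congr
    intro η
    rw [ENNReal.ofReal_natCast]
  have hr2 : r < 2 := by
    have := ENNReal.toReal_lt_toReal hfin (by norm_num : (2 : ℝ≥0∞) ≠ ⊤)
    rw [hr_def]
    simpa using this.mpr hint
  refine ⟨(2 - r) / 2, by linarith, ?_, ?_⟩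
  · -- forward direction
    set q : ((Fin 1 → ℤ) → ℕ) → ℝ := fun η => (2 - (2 - r) / 2) - (η 0 : ℝ) with hq_def
    have hqm : Measurable q := measurable_const.sub hm0
    have hqi : Integrable q ν := (integrable_const _).sub hInt
    have hqpos : 0 < ∫ η, q η ∂ν := by
      rw [hq_def]
      rw [integral_sub (integrable_const _) hInt, integral_const, hIval]
      simp only [measure_univ, probReal_univ, smul_eq_mul, one_mul]
      linarith
    have hbb := birkhoff_bddBelow (hstat (site 1)) hqm hqi hqpos
      (triv_of_gen herg 1 (Or.inl rfl))
    filter_upwards [hbb] with η hη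
    obtain ⟨C, hC⟩ := hη
    refine ⟨C, fun n => ?_⟩
    have hterm : ∀ k ∈ Finset.range n, q ((shiftC 1 (site 1))^[k] η)
        = (2 - (2 - r) / 2) - (η (site k) : ℝ) := by
      intro k _
      show (2 - (2 - r) / 2) - (((shiftC 1 (site 1))^[k] η) 0 : ℝ) = _
      rw [iterate_shift_zero, mul_one]
    have hS : birkhoffSum (shiftC 1 (site 1)) q n η
        = (2 - (2 - r) / 2) * n - ∑ k ∈ Finset.range n, (η (site k) : ℝ) := by
      unfold birkhoffSum
      rw [Finset.sum_congr rfl hterm, Finset.sum_sub_distrib, Finset.sum_const,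
        Finset.card_range, nsmul_eq_mul, mul_comm]
    have := hC n
    rw [hS] at this
    linarith
  · -- backward direction
    set q : ((Fin 1 → ℤ) → ℕ) → ℝ := fun η => (2 - (2 - r) / 2) - (η (site (-1)) : ℝ) with hq_def
    have hm1 : Measurable (fun η : (Fin 1 → ℤ) → ℕ => (η (site (-1)) : ℝ)) :=
      eval_measurable (site (-1)) (fun n => (n : ℝ))
    have hcomp : (fun η : (Fin 1 → ℤ) → ℕ => (η (site (-1)) : ℝ))
        = (fun η : (Fin 1 → ℤ) → ℕ => (η 0 : ℝ)) ∘ (shiftC 1 (site (-1))) := by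
      funext η
      show (η (site (-1)) : ℝ) = ((shiftC 1 (site (-1)) η) 0 : ℝ)
      rw [eval_shift]
    have hInt1 : Integrable (fun η : (Fin 1 → ℤ) → ℕ => (η (site (-1)) : ℝ)) ν := by
      rw [hcomp]
      exact ((hstat (site (-1))).integrable_comp hInt.aestronglyMeasurable).mpr hInt
    have hIval1 : ∫ η, (η (site (-1)) : ℝ) ∂ν = r := by
      rw [hcomp, Function.comp_def]
      rw [integral_comp_shift hstat _ hInt.aestronglyMeasurable (site (-1))]
      exact hIval
    have hqm : Measurable q := measurable_const.sub hm1
    have hqi : Integrable q ν := (integrable_const _).sub hInt1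
    have hqpos : 0 < ∫ η, q η ∂ν := by
      rw [hq_def, integral_sub (integrable_const _) hInt1, integral_const, hIval1]
      simp only [measure_univ, probReal_univ, smul_eq_mul, one_mul]
      linarith
    have hbb := birkhoff_bddBelow (hstat (site (-1))) hqm hqi hqpos
      (triv_of_gen herg (-1) (Or.inr rfl))
    filter_upwards [hbb] with η hη
    obtain ⟨C, hC⟩ := hη
    refine ⟨C, fun n => ?_⟩
    have hterm : ∀ k ∈ Finset.range n, q ((shiftC 1 (site (-1)))^[k] η)
        = (2 - (2 - r) / 2) - (η (site (-1 - k)) : ℝ) := by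
      intro k _
      show (2 - (2 - r) / 2) - ((((shiftC 1 (site (-1)))^[k] η)) (site (-1)) : ℝ) = _
      rw [iterate_shift_apply, smul_site, site_add_site]
      have he2 : (-1 + (k : ℤ) * (-1)) = -1 - k := by ring
      rw [he2]
    have hS : birkhoffSum (shiftC 1 (site (-1))) q n η
        = (2 - (2 - r) / 2) * n - ∑ k ∈ Finset.range n, (η (site (-1 - k)) : ℝ) := by
      unfold birkhoffSum
      rw [Finset.sum_congr rfl hterm, Finset.sum_sub_distrib, Finset.sum_const,
        Finset.card_range, nsmul_eq_mul, mul_comm]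
    have := hC n
    rw [hS] at this
    linarith

end MeasureSide

end D1


namespace D1

section MeasureSide2

variable {ν : Measure ((Fin 1 → ℤ) → ℕ)} [IsProbabilityMeasure ν]

lemma dir2_ae_bound (hstat : Stationary 1 ν) (herg : ErgodicShift 1 ν)
    (hint : (2 : ℝ≥0∞) < ∫⁻ η, (η 0 : ℝ≥0∞) ∂ν) :
    ∃ ρ' : ℝ, 2 < ρ' ∧ ∀ᵐ η ∂ν, ∃ C : ℝ, ∀ n : ℕ,
      ρ' * n - C ≤ ∑ k ∈ Finset.range n, (η (site (-1 - k)) : ℝ) := by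
  -- truncation
  have hsup : ∀ a : ℕ, (⨆ M : ℕ, ((min a M : ℕ) : ℝ≥0∞)) = (a : ℝ≥0∞) := by
    intro a
    apply le_antisymm
    · apply iSup_le
      intro M
      exact_mod_cast Nat.cast_le.mpr (min_le_left a M)
    · apply le_iSup_of_le a
      simp
  have hmeasM : ∀ M : ℕ, Measurable (fun η : (Fin 1 → ℤ) → ℕ => ((min (η 0) M : ℕ) : ℝ≥0∞)) := by
    intro M
    exact (measurable_from_top (f := fun a : ℕ => ((min a M : ℕ) : ℝ≥0∞))).comp
      (measurable_pi_apply 0)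
  have hlim : (⨆ M : ℕ, ∫⁻ η, ((min (η 0) M : ℕ) : ℝ≥0∞) ∂ν) = ∫⁻ η, (η 0 : ℝ≥0∞) ∂ν := by
    rw [← lintegral_iSup hmeasM]
    · apply lintegral_congr
      intro η
      exact hsup (η 0)
    · intro a b hab η
      exact_mod_cast Nat.cast_le.mpr (min_le_min (le_refl _) hab)
  obtain ⟨M, hM⟩ : ∃ M : ℕ, (2 : ℝ≥0∞) < ∫⁻ η, ((min (η 0) M : ℕ) : ℝ≥0∞) ∂ν := by
    rw [← hlim] at hint
    exact lt_iSup_iff.mp hint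
  have hMfin : (∫⁻ η, ((min (η 0) M : ℕ) : ℝ≥0∞) ∂ν) ≤ (M : ℝ≥0∞) := by
    have := lintegral_mono (μ := ν) (fun η : (Fin 1 → ℤ) → ℕ =>
      (Nat.cast_le.mpr (min_le_right (η 0) M) : ((min (η 0) M : ℕ) : ℝ≥0∞) ≤ (M : ℝ≥0∞)))
    simpa using this
  have hfin : (∫⁻ η, ((min (η 0) M : ℕ) : ℝ≥0∞) ∂ν) ≠ ⊤ :=
    ne_of_lt (lt_of_le_of_lt hMfin (ENNReal.natCast_lt_top M))
  set r : ℝ := (∫⁻ η, ((min (η 0) M : ℕ) : ℝ≥0∞) ∂ν).toReal with hr_def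
  have hr2 : 2 < r := by
    have h := (ENNReal.toReal_lt_toReal (by norm_num : (2 : ℝ≥0∞) ≠ ⊤) hfin).mpr hM
    simpa using h
  set ρ' : ℝ := (2 + r) / 2 with hρ_def
  refine ⟨ρ', by linarith, ?_⟩
  -- the truncated height at site -1
  set f : ((Fin 1 → ℤ) → ℕ) → ℝ := fun η => ((min (η (site (-1))) M : ℕ) : ℝ) with hf_def
  set f0 : ((Fin 1 → ℤ) → ℕ) → ℝ := fun η => ((min (η 0) M : ℕ) : ℝ) with hf0_def
  have hf0m : Measurable f0 := eval_measurable 0 (fun a => ((min a M : ℕ) : ℝ))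
  have hfm : Measurable f := eval_measurable (site (-1)) (fun a => ((min a M : ℕ) : ℝ))
  have hf0i : Integrable f0 ν := by
    refine ⟨hf0m.aestronglyMeasurable, ?_⟩
    unfold HasFiniteIntegral
    have he : ∀ η : (Fin 1 → ℤ) → ℕ, ‖f0 η‖ₑ = ((min (η 0) M : ℕ) : ℝ≥0∞) := by
      intro η
      show ‖((η 0 ⊓ M : ℕ) : ℝ)‖ₑ = ((η 0 ⊓ M : ℕ) : ℝ≥0∞)
      generalize (η 0 ⊓ M) = a
      norm_num
    rw [lintegral_congr he]
    exact lt_of_le_of_ne le_top hfin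
  have hf0val : ∫ η, f0 η ∂ν = r := by
    rw [integral_eq_lintegral_of_nonneg_ae (ae_of_all _ (fun η => by rw [hf0_def]; positivity))
      hf0m.aestronglyMeasurable]
    congr 1
    apply lintegral_congr
    intro η
    rw [hf0_def]
    rw [ENNReal.ofReal_natCast]
  have hcomp : f = f0 ∘ (shiftC 1 (site (-1))) := by
    funext η
    rw [hf_def, hf0_def]
    show ((min (η (site (-1))) M : ℕ) : ℝ) = ((min ((shiftC 1 (site (-1)) η) 0) M : ℕ) : ℝ)
    rw [eval_shift]
  have hfi : Integrable f ν := by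
    rw [hcomp]
    exact ((hstat (site (-1))).integrable_comp hf0i.aestronglyMeasurable).mpr hf0i
  have hfval : ∫ η, f η ∂ν = r := by
    rw [hcomp, Function.comp_def]
    rw [integral_comp_shift hstat _ hf0i.aestronglyMeasurable (site (-1))]
    exact hf0val
  set q : ((Fin 1 → ℤ) → ℕ) → ℝ := fun η => f η - ρ' with hq_def
  have hqm : Measurable q := hfm.sub measurable_const
  have hqi : Integrable q ν := hfi.sub (integrable_const _)
  have hqpos : 0 < ∫ η, q η ∂ν := by
    rw [hq_def, integral_sub hfi (integrable_const _), integral_const, hfval]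
    simp only [measure_univ, probReal_univ, smul_eq_mul, one_mul]
    rw [hρ_def]
    linarith
  have hbb := birkhoff_bddBelow (hstat (site (-1))) hqm hqi hqpos
    (triv_of_gen herg (-1) (Or.inr rfl))
  filter_upwards [hbb] with η hη
  obtain ⟨C, hC⟩ := hη
  refine ⟨C, fun n => ?_⟩
  have hterm : ∀ k ∈ Finset.range n, q ((shiftC 1 (site (-1)))^[k] η)
      = ((min (η (site (-1 - k))) M : ℕ) : ℝ) - ρ' := by
    intro k _
    show ((min ((((shiftC 1 (site (-1)))^[k] η)) (site (-1))) M : ℕ) : ℝ) - ρ' = _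
    rw [iterate_shift_apply, smul_site, site_add_site]
    have he2 : (-1 + (k : ℤ) * (-1)) = -1 - k := by ring
    rw [he2]
  have hS : birkhoffSum (shiftC 1 (site (-1))) q n η
      = (∑ k ∈ Finset.range n, ((min (η (site (-1 - k))) M : ℕ) : ℝ)) - ρ' * n := by
    unfold birkhoffSum
    rw [Finset.sum_congr rfl hterm, Finset.sum_sub_distrib, Finset.sum_const,
      Finset.card_range, nsmul_eq_mul, mul_comm]
  have h1 := hC n
  rw [hS] at h1
  have h2 : (∑ k ∈ Finset.range n, ((min (η (site (-1 - k))) M : ℕ) : ℝ))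
      ≤ ∑ k ∈ Finset.range n, (η (site (-1 - k)) : ℝ) := by
    apply Finset.sum_le_sum
    intro k _
    exact_mod_cast Nat.cast_le.mpr (min_le_left _ _)
  linarith

end MeasureSide2

end D1


namespace D1

section Dir1Main

variable {ν : Measure ((Fin 1 → ℤ) → ℕ)} [IsProbabilityMeasure ν]

lemma dir1_main (hstat : Stationary 1 ν) (herg : ErgodicShift 1 ν)
    (hint : (∫⁻ η, (η 0 : ℝ≥0∞) ∂ν) < 2) : ν (StabSet 1) = 1 := by
  obtain ⟨δ, hδ, hF, hB⟩ := dir1_ae_bounds hstat herg hint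
  have hae : ∀ᵐ η ∂ν, η ∈ StabSet 1 := by
    filter_upwards [hF, hB] with η h1 h2
    obtain ⟨C1, hC1⟩ := h1
    obtain ⟨C2, hC2⟩ := h2
    apply stabilizable_of_drift
    · -- positive tail of P is ≤ 0
      obtain ⟨N, hN⟩ := exists_nat_gt (C1 / δ)
      refine ⟨(N : ℤ) + 1, fun t ht => ?_⟩
      have ht0 : 0 ≤ t := by omega
      set n : ℕ := t.toNat with hn_def
      have hnt : ((n : ℤ)) = t := Int.toNat_of_nonneg ht0
      have hP : Pfun η t = ∑ k ∈ Finset.range n, ((η (site k) : ℤ) - 2) := by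
        unfold Pfun cum
        rw [if_pos ht0, ← hnt]
        exact sum_Ico_nonneg_int _ n
      have hcast : ((Pfun η t : ℤ) : ℝ)
          = (∑ k ∈ Finset.range n, (η (site k) : ℝ)) - 2 * n := by
        rw [hP]
        push_cast
        rw [Finset.sum_sub_distrib, Finset.sum_const, Finset.card_range, nsmul_eq_mul, mul_comm]
      have hfin : ((Pfun η t : ℤ) : ℝ) ≤ 0 := by
        have hb := hC1 n
        have hCn : C1 < δ * n := by
          have h3 : C1 / δ < n := by
            have : (N : ℝ) < (n : ℝ) := by
              have : (N : ℤ) < n := by omega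
              exact_mod_cast this
            linarith
          calc C1 = (C1 / δ) * δ := by field_simp
          _ < (n : ℝ) * δ := by
            apply mul_lt_mul_of_pos_right h3 hδ
          _ = δ * n := by ring
        rw [hcast]
        linarith
      exact_mod_cast hfin
    · -- negative tail of P is ≥ 0
      obtain ⟨N, hN⟩ := exists_nat_gt (C2 / δ)
      refine ⟨-(N : ℤ) - 1, fun t ht => ?_⟩
      have ht0 : t < 0 := by omega
      set n : ℕ := (-t).toNat with hn_def
      have hnt : (-(n : ℤ)) = t := by omega
      have hP : Pfun η t = - ∑ k ∈ Finset.range n, ((η (site (-1 - k)) : ℤ) - 2) := by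
        unfold Pfun cum
        rw [if_neg (by omega)]
        congr 1
        rw [← hnt]
        exact sum_Ico_neg_int _ n
      have hcast : ((Pfun η t : ℤ) : ℝ)
          = 2 * n - (∑ k ∈ Finset.range n, (η (site (-1 - k)) : ℝ)) := by
        rw [hP]
        push_cast
        rw [Finset.sum_sub_distrib, Finset.sum_const, Finset.card_range, nsmul_eq_mul, mul_comm]
        ring
      have hfin : (0 : ℝ) ≤ ((Pfun η t : ℤ) : ℝ) := by
        have hb := hC2 n
        have hCn : C2 < δ * n := by
          have h3 : C2 / δ < n := by
            have : (N : ℝ) < (n : ℝ) := by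
              have : (N : ℤ) < n := by omega
              exact_mod_cast this
            linarith
          calc C2 = (C2 / δ) * δ := by field_simp
          _ < (n : ℝ) * δ := by
            apply mul_lt_mul_of_pos_right h3 hδ
          _ = δ * n := by ring
        rw [hcast]
        linarith
      exact_mod_cast hfin
  have hnull : ν (StabSet 1)ᶜ = 0 := by
    have h := ae_iff.mp hae
    exact h
  apply le_antisymm
  · exact prob_le_one
  · calc (1 : ℝ≥0∞) = ν Set.univ := measure_univ.symm
    _ ≤ ν (StabSet 1) + ν (StabSet 1)ᶜ := by
        rw [← Set.union_compl_self (StabSet 1)]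
        exact measure_union_le _ _
    _ = ν (StabSet 1) := by rw [hnull, add_zero]

end Dir1Main

end D1


namespace D1

lemma gauss_lb : ∀ n : ℕ, (n : ℝ) * ((n : ℝ) - 1) / 2 ≤ ∑ k ∈ Finset.range n, ((2 : ℝ) + k) := by
  intro n
  induction n with
  | zero => simp
  | succ n ih =>
    rw [Finset.sum_range_succ]
    push_cast
    nlinarith [ih]

lemma dir2_det (η : (Fin 1 → ℤ) → ℕ) (hη : Stabilizable 1 η) (ρ' C : ℝ) (hρ : 2 < ρ')
    (hB : ∀ n : ℕ, ρ' * n - C ≤ ∑ k ∈ Finset.range n, (η (site (-1 - k)) : ℝ)) : False := by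
  classical
  obtain ⟨C0, hC0⟩ := hη (site 0)
  obtain ⟨C1, hC1⟩ := hη (site (-1))
  set D : ℝ := (C0 : ℝ) + |C| + ρ' + (C1 : ℝ) + 1 with hD_def
  have hA : (0 : ℝ) < ρ' - 2 := by linarith
  obtain ⟨n, hn⟩ := exists_nat_gt (max 1 (2 * D / (ρ' - 2) + 1))
  have hn1 : (1 : ℝ) < (n : ℝ) := lt_of_le_of_lt (le_max_left _ _) hn
  have hnD : 2 * D / (ρ' - 2) + 1 < (n : ℝ) := lt_of_le_of_lt (le_max_right _ _) hn
  have hn1' : 1 ≤ n := by exact_mod_cast hn1.le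
  have hn0 : (0 : ℝ) < (n : ℝ) := by linarith
  -- the finite volume
  set V : Finset (Fin 1 → ℤ) := (Finset.Icc (-(n : ℤ) - 1) 1).image site with hV_def
  have hmem : ∀ t : ℤ, -(n : ℤ) - 1 ≤ t → t ≤ 1 → site t ∈ V := by
    intro t h1 h2
    exact Finset.mem_image_of_mem site (Finset.mem_Icc.mpr ⟨h1, h2⟩)
  obtain ⟨m, hm⟩ := exists_minstab η V
  have hm0 : m (site 0) ≤ C0 := hC0 V m hm (hmem 0 (by omega) (by omega))
  have hm1 : m (site (-1)) ≤ C1 := hC1 V m hm (hmem (-1) (by omega) (by omega))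
  set Fm : ℤ → ℤ := fun t => (m (site (t - 1)) : ℤ) - (m (site t) : ℤ) with hFm_def
  have hkey : ∀ c ∈ Finset.Ico (-(n : ℤ)) 0,
      ∑ x ∈ Finset.Ico c 1, (η (site x) : ℤ)
        ≤ 2 * (1 - c) + (Fm 1 - Fm c) := by
    intro c hc
    rw [Finset.mem_Ico] at hc
    have hub : ∀ x ∈ Finset.Ico c 1, (η (site x) : ℤ) ≤ 2 + (Fm (x + 1) - Fm x) := by
      intro x hx
      rw [Finset.mem_Ico] at hx
      have hxV : site x ∈ V := hmem x (by omega) (by omega)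
      have hs := hm.1 (site x) hxV
      rw [lapV_interior V m x (hmem (x + 1) (by omega) (by omega))
        (hmem (x - 1) (by omega) (by omega))] at hs
      have hF1 : Fm (x + 1) = (m (site x) : ℤ) - (m (site (x + 1)) : ℤ) := by
        rw [hFm_def]
        simp only [add_sub_cancel_right]
      have hF2 : Fm x = (m (site (x - 1)) : ℤ) - (m (site x) : ℤ) := rfl
      rw [hF1, hF2]
      push_cast at hs
      omega
    have hcard : ((Finset.Ico c (1 : ℤ)).card : ℤ) = 1 - c := by
      rw [Int.card_Ico]
      omega
    calc ∑ x ∈ Finset.Ico c 1, (η (site x) : ℤ)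
        ≤ ∑ x ∈ Finset.Ico c 1, (2 + (Fm (x + 1) - Fm x)) := Finset.sum_le_sum hub
      _ = ∑ _x ∈ Finset.Ico c 1, (2 : ℤ) + ∑ x ∈ Finset.Ico c 1, (Fm (x + 1) - Fm x) :=
          Finset.sum_add_distrib
      _ = 2 * (1 - c) + (Fm 1 - Fm c) := by
          rw [telescope_sub Fm (by omega : c ≤ 1), Finset.sum_const, nsmul_eq_mul, hcard]
          ring
  set S : ℤ := ∑ c ∈ Finset.Ico (-(n : ℤ)) 0, (1 - c) with hS_def
  have hcardn' : (Finset.Ico (-(n : ℤ)) 0).card = n := by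
    rw [Int.card_Ico]
    omega
  have hsumF : ∑ c ∈ Finset.Ico (-(n : ℤ)) 0, (Fm 1 - Fm c)
      = (n : ℤ) * Fm 1 - ((m (site (-(n : ℤ) - 1)) : ℤ) - (m (site (-1)) : ℤ)) := by
    rw [Finset.sum_sub_distrib, Finset.sum_const, nsmul_eq_mul, hcardn']
    have htel : ∑ c ∈ Finset.Ico (-(n : ℤ)) 0, Fm c
        = (m (site (-(n : ℤ) - 1)) : ℤ) - (m (site (-1)) : ℤ) := by
      have h2 := telescope_sub (fun t => - (m (site (t - 1)) : ℤ)) (by omega : -(n : ℤ) ≤ 0)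
      have hcg : ∀ c ∈ Finset.Ico (-(n : ℤ)) 0,
          Fm c = (fun t => - (m (site (t - 1)) : ℤ)) (c + 1)
            - (fun t => - (m (site (t - 1)) : ℤ)) c := by
        intro c _
        show Fm c = - (m (site (c + 1 - 1)) : ℤ) - (- (m (site (c - 1)) : ℤ))
        rw [hFm_def]
        simp only [add_sub_cancel_right]
        ring
      rw [Finset.sum_congr rfl hcg, h2]
      have hz01 : ((0 : ℤ) - 1) = -1 := by norm_num
      simp only [hz01]
      ring
    rw [htel]
  have htot : ∑ c ∈ Finset.Ico (-(n : ℤ)) 0, (∑ x ∈ Finset.Ico c 1, (η (site x) : ℤ))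
      ≤ 2 * S + (C1 : ℤ) + (n : ℤ) * (C0 : ℤ) := by
    have h1 : ∑ c ∈ Finset.Ico (-(n : ℤ)) 0, (∑ x ∈ Finset.Ico c 1, (η (site x) : ℤ))
        ≤ ∑ c ∈ Finset.Ico (-(n : ℤ)) 0, (2 * (1 - c) + (Fm 1 - Fm c)) :=
      Finset.sum_le_sum hkey
    have h2 : ∑ c ∈ Finset.Ico (-(n : ℤ)) 0, (2 * (1 - c) + (Fm 1 - Fm c))
        = 2 * S + ((n : ℤ) * Fm 1 - ((m (site (-(n : ℤ) - 1)) : ℤ) - (m (site (-1)) : ℤ))) := by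
      rw [Finset.sum_add_distrib, hsumF, hS_def, ← Finset.mul_sum]
    have h3 : (n : ℤ) * Fm 1 ≤ (n : ℤ) * (C0 : ℤ) := by
      apply mul_le_mul_of_nonneg_left _ (by positivity)
      show (m (site (1 - 1)) : ℤ) - (m (site 1) : ℤ) ≤ (C0 : ℤ)
      have hz : (1 : ℤ) - 1 = 0 := by norm_num
      rw [hz]
      have hc0 : (m (site 0) : ℤ) ≤ (C0 : ℤ) := by exact_mod_cast hm0
      have hnn : (0 : ℤ) ≤ (m (site 1) : ℤ) := by positivity
      omega
    have h4 : (0 : ℤ) ≤ (m (site (-(n : ℤ) - 1)) : ℤ) := by positivity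
    have h5 : ((m (site (-1)) : ℤ)) ≤ (C1 : ℤ) := by exact_mod_cast hm1
    omega
  -- lower bound from the ergodic estimate
  have hlow : ∀ c ∈ Finset.Ico (-(n : ℤ)) 0,
      ρ' * (1 - (c : ℝ)) - (C + ρ') ≤ ((∑ x ∈ Finset.Ico c 1, (η (site x) : ℤ) : ℤ) : ℝ) := by
    intro c hc
    rw [Finset.mem_Ico] at hc
    set nc : ℕ := (-c).toNat with hnc_def
    have hncc : ((nc : ℤ)) = -c := by omega
    have hsplit : Finset.Ico c (1 : ℤ) = insert 0 (Finset.Ico c 0) := by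
      apply Finset.ext
      intro t
      simp only [Finset.mem_Ico, Finset.mem_insert]
      omega
    have hneg : ∑ x ∈ Finset.Ico c 0, (η (site x) : ℤ)
        = ∑ k ∈ Finset.range nc, (η (site (-1 - k)) : ℤ) := by
      have h := sum_Ico_neg_int (fun t => (η (site t) : ℤ)) nc
      have hc2 : -((nc : ℕ) : ℤ) = c := by omega
      rw [hc2] at h
      exact h
    have hcast : ((∑ x ∈ Finset.Ico c 1, (η (site x) : ℤ) : ℤ) : ℝ)
        = (η (site 0) : ℝ) + ∑ k ∈ Finset.range nc, (η (site (-1 - k)) : ℝ) := by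
      rw [hsplit, Finset.sum_insert (by simp), hneg]
      push_cast
      ring
    have hnn : (0 : ℝ) ≤ (η (site 0) : ℝ) := by positivity
    have hncr : ((nc : ℕ) : ℝ) = -(c : ℝ) := by exact_mod_cast hncc
    have hval : ρ' * (1 - (c : ℝ)) - (C + ρ') = ρ' * ((nc : ℕ) : ℝ) - C := by
      rw [hncr]
      ring
    rw [hcast, hval]
    linarith [hB nc]
  -- summing the lower bounds
  have hconv : ((S : ℤ) : ℝ) = ∑ c ∈ Finset.Ico (-(n : ℤ)) 0, (1 - (c : ℝ)) := by
    rw [hS_def]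
    push_cast
    rfl
  have h6 : ∑ c ∈ Finset.Ico (-(n : ℤ)) 0, (ρ' * (1 - (c : ℝ)) - (C + ρ'))
      ≤ ∑ c ∈ Finset.Ico (-(n : ℤ)) 0, ((∑ x ∈ Finset.Ico c 1, (η (site x) : ℤ) : ℤ) : ℝ) :=
    Finset.sum_le_sum hlow
  have h7 : ∑ c ∈ Finset.Ico (-(n : ℤ)) 0, (ρ' * (1 - (c : ℝ)) - (C + ρ'))
      = ρ' * ((S : ℤ) : ℝ) - (n : ℝ) * (C + ρ') := by
    rw [Finset.sum_sub_distrib, ← Finset.mul_sum, ← hconv, Finset.sum_const, hcardn',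
      nsmul_eq_mul]
  have h8 : ∑ c ∈ Finset.Ico (-(n : ℤ)) 0, ((∑ x ∈ Finset.Ico c 1, (η (site x) : ℤ) : ℤ) : ℝ)
      = ((∑ c ∈ Finset.Ico (-(n : ℤ)) 0, (∑ x ∈ Finset.Ico c 1, (η (site x) : ℤ)) : ℤ) : ℝ) := by
    push_cast
    rfl
  have htotR : ((∑ c ∈ Finset.Ico (-(n : ℤ)) 0, (∑ x ∈ Finset.Ico c 1, (η (site x) : ℤ)) : ℤ) : ℝ)
      ≤ 2 * ((S : ℤ) : ℝ) + (C1 : ℝ) + (n : ℝ) * (C0 : ℝ) := by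
    exact_mod_cast htot
  -- Gauss lower bound for S
  have hSeq : S = ∑ k ∈ Finset.range n, (2 + (k : ℤ)) := by
    rw [hS_def, sum_Ico_neg_int (fun t => 1 - t) n]
    apply Finset.sum_congr rfl
    intro k _
    ring
  have hSr : (n : ℝ) * ((n : ℝ) - 1) / 2 ≤ ((S : ℤ) : ℝ) := by
    rw [hSeq]
    push_cast
    exact gauss_lb n
  -- final contradiction
  set Sr : ℝ := ((S : ℤ) : ℝ) with hSr_def
  have key1 : (ρ' - 2) * Sr ≤ (n : ℝ) * D := by
    have hCabs : C ≤ |C| := le_abs_self C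
    have hC1nn : (0 : ℝ) ≤ (C1 : ℝ) := by positivity
    have k0 : ρ' * Sr - (n : ℝ) * (C + ρ') ≤ 2 * Sr + (C1 : ℝ) + (n : ℝ) * (C0 : ℝ) := by
      have h9 := h6
      rw [h7, h8] at h9
      have h10 : 2 * ((S : ℤ) : ℝ) + (C1 : ℝ) + (n : ℝ) * (C0 : ℝ) = 2 * Sr + (C1 : ℝ) + (n : ℝ) * (C0 : ℝ) := rfl
      linarith [htotR]
    have k1 : (ρ' - 2) * Sr ≤ (n : ℝ) * (C + ρ') + (C1 : ℝ) + (n : ℝ) * (C0 : ℝ) := by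
      have hring : (ρ' - 2) * Sr = ρ' * Sr - 2 * Sr := by ring
      linarith
    have hDexp : (n : ℝ) * D = (n : ℝ) * (C0 : ℝ) + (n : ℝ) * |C| + (n : ℝ) * ρ'
        + (n : ℝ) * (C1 : ℝ) + (n : ℝ) := by
      rw [hD_def]
      ring
    have hnC : (n : ℝ) * C ≤ (n : ℝ) * |C| :=
      mul_le_mul_of_nonneg_left hCabs (le_of_lt hn0)
    have hC1n : (C1 : ℝ) ≤ (n : ℝ) * (C1 : ℝ) := le_mul_of_one_le_left hC1nn hn1.le
    have hnCp : (n : ℝ) * (C + ρ') = (n : ℝ) * C + (n : ℝ) * ρ' := by ring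
    linarith
  have hdiv : 2 * D < ((n : ℝ) - 1) * (ρ' - 2) := by
    have := (div_lt_iff₀ hA).mp (by linarith : 2 * D / (ρ' - 2) < (n : ℝ) - 1)
    linarith
  have e1 : (ρ' - 2) * ((n : ℝ) * ((n : ℝ) - 1) / 2) ≤ (ρ' - 2) * Sr :=
    mul_le_mul_of_nonneg_left hSr hA.le
  have e3 : (n : ℝ) * (2 * D) < (n : ℝ) * (((n : ℝ) - 1) * (ρ' - 2)) :=
    mul_lt_mul_of_pos_left hdiv hn0
  have e4 : (ρ' - 2) * ((n : ℝ) * ((n : ℝ) - 1) / 2)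
      = (n : ℝ) * (((n : ℝ) - 1) * (ρ' - 2)) / 2 := by ring
  linarith

end D1


namespace D1

section Dir2Main

variable {ν : Measure ((Fin 1 → ℤ) → ℕ)} [IsProbabilityMeasure ν]

lemma dir2_main (hstat : Stationary 1 ν) (herg : ErgodicShift 1 ν)
    (hint : (2 : ℝ≥0∞) < ∫⁻ η, (η 0 : ℝ≥0∞) ∂ν) : ν (StabSet 1) ≠ 1 := by
  intro hS
  obtain ⟨ρ', hρ, hae⟩ := dir2_ae_bound hstat herg hint
  set B : Set ((Fin 1 → ℤ) → ℕ) := {η | ∃ C : ℝ, ∀ n : ℕ,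
    ρ' * n - C ≤ ∑ k ∈ Finset.range n, (η (site (-1 - k)) : ℝ)} with hB_def
  have hBc : ν Bᶜ = 0 := by
    have h := ae_iff.mp hae
    simpa [hB_def, Set.compl_setOf] using h
  have hdiff : ν (StabSet 1 \ B) = 0 :=
    measure_mono_null (fun x hx => hx.2) hBc
  have hpos : 0 < ν (StabSet 1 ∩ B) := by
    have hle := measure_le_inter_add_diff ν (StabSet 1) B
    rw [hS, hdiff, add_zero] at hle
    exact lt_of_lt_of_le (by norm_num) hle
  obtain ⟨η, hηS, hηB⟩ := nonempty_of_measure_ne_zero (ne_of_gt hpos)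
  obtain ⟨C, hC⟩ := hηB
  exact dir2_det η hηS ρ' C hρ hC

end Dir2Main

end D1


/-- in dimension 1, a stationary ergodic probability measure with mean height
`< 2` is stabilizable, and one with mean height `> 2` is not. -/
theorem dimension_one_dichotomy (ν : Measure ((Fin 1 → ℤ) → ℕ)) [IsProbabilityMeasure ν]
    (hH : ν (Heights 1) = 1) (hstat : Stationary 1 ν) (herg : ErgodicShift 1 ν) :
    ((∫⁻ η, (η 0 : ℝ≥0∞) ∂ν) < 2 → ν (StabSet 1) = 1) ∧
    ((2 : ℝ≥0∞) < (∫⁻ η, (η 0 : ℝ≥0∞) ∂ν) → ν (StabSet 1) ≠ 1) := by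
  constructor
  · intro h
    exact D1.dir1_main hstat herg h
  · intro h
    exact D1.dir2_main hstat herg h
end

section
/- Let d = 1 and let η : ℤ → ℕ be the configuration with η(n) = 3 for n even and η(n) = 1 for n odd (the alternating configuration 313131…, of density 2). Then η is not stabilizable; the same holds for its shift, with η(n) = 1 for n even and η(n) = 3 for n odd. -/
open MeasureTheory
open scoped ENNReal

/-!
Around a site `s` of height 3, the tent function `⌊(2C + 2 - |a - s|) / 2⌋` is an exact
toppling vector on the window `[s - 2C, s + 2C]`: it leaves height 2 everywhere except
height 1 at `s`. By the one-dimensional maximum principle it lies below every stabilizing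
toppling vector, so it is `m_V^η`, and its value `C + 1` at `s` is unbounded in `C`.
-/

def lineEmb : ℤ ↪ (Fin 1 → ℤ) := ⟨fun a _ => a, fun _ _ h => congrFun h 0⟩

@[simp]
lemma lineEmb_apply (a : ℤ) (i : Fin 1) : lineEmb a i = a := rfl

def lapLine (u : ℤ → ℤ) (a : ℤ) : ℤ := 2 * u a - u (a - 1) - u (a + 1)

def lineExt (I : Finset ℤ) (m : (Fin 1 → ℤ) → ℕ) (b : ℤ) : ℤ :=
  if b ∈ I then m (lineEmb b) else 0

lemma lineExt_of_mem {I : Finset ℤ} {b : ℤ} (m : (Fin 1 → ℤ) → ℕ) (hb : b ∈ I) :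
    lineExt I m b = m (lineEmb b) :=
  if_pos hb

lemma lapV_map_lineEmb (I : Finset ℤ) (m : (Fin 1 → ℤ) → ℕ) {a : ℤ} (ha : a ∈ I) :
    lapV 1 (I.map lineEmb) m (lineEmb a) = lapLine (lineExt I m) a := by
  have hnbrs : I.filter (fun b => adj 1 (lineEmb a) (lineEmb b)) = {a - 1, a + 1} ∩ I := by
    ext b
    simp only [Finset.mem_filter, Finset.mem_inter, Finset.mem_insert, Finset.mem_singleton,
      adj, lineEmb_apply, Fin.sum_univ_one]
    rw [and_comm]
    exact and_congr_left fun _ => by omega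
  have hsum : ∑ y ∈ (I.map lineEmb).filter (adj 1 (lineEmb a)), (m y : ℤ)
      = lineExt I m (a - 1) + lineExt I m (a + 1) := by
    rw [Finset.filter_map, Finset.sum_map]
    change ∑ b ∈ I.filter (fun b => adj 1 (lineEmb a) (lineEmb b)), (m (lineEmb b) : ℤ) = _
    rw [hnbrs, ← Finset.sum_ite_mem, Finset.sum_pair (by omega)]
    rfl
  rw [lapV, hsum, lapLine, lineExt_of_mem m ha]
  push_cast
  ring

lemma stabilizes_map_lineEmb_iff (I : Finset ℤ) (η m : (Fin 1 → ℤ) → ℕ) :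
    Stabilizes 1 (I.map lineEmb) η m ↔
      ∀ a ∈ I, (η (lineEmb a) : ℤ) - lapLine (lineExt I m) a ≤ 2 := by
  simp only [Stabilizes, Finset.forall_mem_map, Nat.cast_one, mul_one]
  exact forall₂_congr fun a ha => by rw [lapV_map_lineEmb I m ha]

lemma eq_of_lapLine_le_of_isMax {D : ℤ → ℤ} {M z c : ℤ} (hle : ∀ b, D b ≤ M)
    (hc : D c = M) (hlap : lapLine D c ≤ if c = z then 1 else 0)
    (hnbr : D (c - 1) < M ∨ D (c + 1) < M) : c = z := by
  by_contra hne
  rw [if_neg hne, lapLine] at hlap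
  rcases hnbr with h | h <;> linarith [hle (c - 1), hle (c + 1)]

theorem le_zero_of_lapLine_le {D : ℤ → ℤ} {I : Finset ℤ} {z : ℤ}
    (hout : ∀ a ∉ I, D a ≤ 0) (hin : ∀ a ∈ I, lapLine D a ≤ if a = z then 1 else 0)
    (a : ℤ) : D a ≤ 0 := by
  by_contra! hpos
  have hmem : ∀ c, 0 < D c → c ∈ I := fun c hc => by_contra fun h => (hout c h).not_gt hc
  obtain ⟨b, hbI, hbmax⟩ := I.exists_max_image D ⟨a, hmem a hpos⟩
  have hb : 0 < D b := hpos.trans_le (hbmax a (hmem a hpos))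
  have hle : ∀ c, D c ≤ D b := fun c =>
    if hc : c ∈ I then hbmax c hc else (hout c hc).trans hb.le
  set W := I.filter (fun c => D c = D b)
  have hWne : W.Nonempty := ⟨b, Finset.mem_filter.2 ⟨hbI, rfl⟩⟩
  have hlt : ∀ c, c ∉ W → D c < D b := fun c hc =>
    (hle c).lt_of_ne fun h => hc (Finset.mem_filter.2 ⟨hmem c (h ▸ hb), h⟩)
  obtain ⟨hmaxI, hmaxD⟩ := Finset.mem_filter.1 (W.max'_mem hWne)
  obtain ⟨hminI, hminD⟩ := Finset.mem_filter.1 (W.min'_mem hWne)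
  have hrnbr : D (W.max' hWne + 1) < D b :=
    hlt _ fun h => (lt_add_one _).not_ge (W.le_max' _ h)
  have hlnbr : D (W.min' hWne - 1) < D b :=
    hlt _ fun h => (sub_one_lt _).not_ge (W.min'_le _ h)
  -- The rightmost and the leftmost maximizer both have a strictly smaller neighbour,
  -- so both are the source `z`; but then `lapLine D z ≥ 2`.
  have hright : W.max' hWne = z :=
    eq_of_lapLine_le_of_isMax hle hmaxD (hin _ hmaxI) (Or.inr hrnbr)
  have hleft : W.min' hWne = z :=
    eq_of_lapLine_le_of_isMax hle hminD (hin _ hminI) (Or.inl hlnbr)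
  rw [hright] at hmaxI hmaxD hrnbr
  rw [hleft] at hlnbr
  have := hin z hmaxI
  rw [if_pos rfl, lapLine] at this
  linarith

lemma le_lineExt_of_stabilizes {I : Finset ℤ} {η m : (Fin 1 → ℤ) → ℕ} {f : ℤ → ℤ}
    {z : ℤ} (hout : ∀ b ∉ I, f b ≤ 0)
    (hin : ∀ a ∈ I, 2 - (if a = z then 1 else 0) ≤ (η (lineEmb a) : ℤ) - lapLine f a)
    (hm : Stabilizes 1 (I.map lineEmb) η m) (a : ℤ) : f a ≤ lineExt I m a := by
  rw [stabilizes_map_lineEmb_iff] at hm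
  refine sub_nonpos.1 (le_zero_of_lapLine_le (D := fun b => f b - lineExt I m b) (I := I)
    (z := z) (fun b hb => ?_) (fun b hb => ?_) a)
  · simpa [lineExt, hb] using hout b hb
  · have hf := hin b hb
    have hmb := hm b hb
    simp only [lapLine] at hf hmb ⊢
    linarith

-- Truncated subtraction makes the tent vanish for `|a - s| > 2C`.
def tent (C : ℕ) (s a : ℤ) : ℕ := (2 * C + 2 - (a - s).natAbs) / 2

lemma tent_self (C : ℕ) (s : ℤ) : tent C s s = C + 1 := by
  simp only [tent, sub_self, Int.natAbs_zero]
  omega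

lemma tent_eq_zero {C : ℕ} {s a : ℤ} (ha : a ∉ Finset.Icc (s - 2 * C) (s + 2 * C)) :
    tent C s a = 0 := by
  rw [Finset.mem_Icc] at ha
  simp only [tent]
  omega

lemma alternating_sub_lapLine_tent {C : ℕ} {s a : ℤ}
    (ha : a ∈ Finset.Icc (s - 2 * C) (s + 2 * C)) :
    ((if Even (a - s) then 3 else 1 : ℕ) : ℤ) - lapLine (fun b => tent C s b) a
      = 2 - if a = s then 1 else 0 := by
  rw [Finset.mem_Icc] at ha
  simp only [tent, lapLine, Int.even_iff]
  split_ifs <;> omega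

lemma isMinStab_tent (C : ℕ) (s : ℤ) (η : (Fin 1 → ℤ) → ℕ)
    (hη : ∀ a, η (lineEmb a) = if Even (a - s) then 3 else 1) :
    IsMinStab 1 ((Finset.Icc (s - 2 * C) (s + 2 * C)).map lineEmb) η
      (fun x => tent C s (x 0)) := by
  set I := Finset.Icc (s - 2 * C) (s + 2 * C)
  have hext : lineExt I (fun x => tent C s (x 0)) = fun b => (tent C s b : ℤ) := by
    ext b
    by_cases hb : b ∈ I
    · rw [lineExt_of_mem _ hb]; rfl
    · simp only [lineExt, if_neg hb, tent_eq_zero hb, Nat.cast_zero]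
  refine ⟨(stabilizes_map_lineEmb_iff I η _).2 fun a ha => ?_, fun m hm => ?_⟩
  · rw [hext, hη, alternating_sub_lapLine_tent ha]
    split_ifs <;> omega
  · rw [Finset.forall_mem_map]
    intro a ha
    have hle := le_lineExt_of_stabilizes (f := fun b => (tent C s b : ℤ)) (z := s)
      (fun b hb => by rw [tent_eq_zero hb, Nat.cast_zero])
      (fun b hb => by rw [hη, alternating_sub_lapLine_tent hb]) hm a
    rw [lineExt_of_mem _ ha] at hle
    exact_mod_cast hle

theorem not_stabilizable_of_alternating (s : ℤ) (η : (Fin 1 → ℤ) → ℕ)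
    (hη : ∀ a, η (lineEmb a) = if Even (a - s) then 3 else 1) : ¬ Stabilizable 1 η := by
  intro h
  obtain ⟨C, hC⟩ := h (lineEmb s)
  have hs : lineEmb s ∈ (Finset.Icc (s - 2 * C) (s + 2 * C)).map lineEmb :=
    Finset.mem_map_of_mem _ (Finset.mem_Icc.2 ⟨by omega, by omega⟩)
  have := hC _ _ (isMinStab_tent C s η hη) hs
  simp only [lineEmb_apply, tent_self] at this
  omega

/-- in dimension 1, the alternating configuration `313131...` and its shift
`131313...` are not stabilizable. -/
theorem alternating_31_not_stabilizable :
    ¬ Stabilizable 1 (fun x : Fin 1 → ℤ => if Even (x 0) then 3 else 1) ∧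
    ¬ Stabilizable 1 (fun x : Fin 1 → ℤ => if Even (x 0) then 1 else 3) :=
  ⟨not_stabilizable_of_alternating 0 _ fun a => by
      simp only [lineEmb_apply, sub_zero]; congr,
    not_stabilizable_of_alternating 1 _ fun a => by
      simp only [lineEmb_apply, Int.even_sub_one, ite_not]; congr⟩
end
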